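/- arXiv:2004.08489 — 7 statements merged into one kernel-verified Lean document; each statement's English description precedes it below -/
import Mathlib

section
/- Let X be a self-adjoint pseudodifferential operator in ∂ over a commutative differential algebra V of the form X = ∂^{2n+2} + ∂^n a_n ∂^n + … + ∂ a_1 ∂ + a_0 + ∂⁻¹ a_{−1} ∂⁻¹ + … (i.e. X = Σ_{k ≤ n} ∂^k a_k ∂^k with a_{n+1}=1). Then the positive part (∂⁻¹X)₊ composed with ∂⁻¹ on the right, namely (∂⁻¹X)₊ ∂⁻¹, equals ∂^{2n} + ∂^{n−1} a_n ∂^{n−1} + … + a_1, which is a self-adjoint differential operator. -/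
/-!
Split `X = (∂^{2n+2} + ∑_{k ≥ 1} ∂^k a_k ∂^k) + (a₀ + N)`. Left multiplication by `∂⁻¹` sends the
first summand to the differential operator `∂^{2n+1} + ∑ ∂^{k-1} a_k ∂^k` and the second to an
operator of negative order, so `(∂⁻¹X)₊` is the former, and multiplying it by `∂⁻¹` on the right
lowers each right-hand exponent by one. Each `∂^m a ∂^m` is self-adjoint because the signs
`(-1)^m` coming from `∂* = -∂` on the two sides cancel.
-/

open Finset

section Monoid

variable {M : Type*} [Monoid M] (u : Mˣ) {k : ℕ}

lemma Units.inv_mul_pow_of_ne_zero (hk : k ≠ 0) :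
    ((u⁻¹ : Mˣ) : M) * (u : M) ^ k = (u : M) ^ (k - 1) := by
  rw [← mul_pow_sub_one hk, Units.inv_mul_cancel_left]

lemma Units.pow_mul_inv_of_ne_zero (hk : k ≠ 0) :
    (u : M) ^ k * ((u⁻¹ : Mˣ) : M) = (u : M) ^ (k - 1) := by
  rw [← pow_sub_one_mul hk, Units.mul_inv_cancel_right]

end Monoid

section Semiring

variable {R : Type*} [Semiring R] (u : Rˣ) {s : Finset ℕ} (x : ℕ → R)

lemma Units.inv_mul_sum_pow_mul_mul_pow (hs : 0 ∉ s) :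
    ((u⁻¹ : Rˣ) : R) * ∑ k ∈ s, (u : R) ^ k * x k * (u : R) ^ k
      = ∑ k ∈ s, (u : R) ^ (k - 1) * x k * (u : R) ^ k := by
  rw [mul_sum]
  refine sum_congr rfl fun k hk => ?_
  rw [← mul_assoc, ← mul_assoc, u.inv_mul_pow_of_ne_zero (ne_of_mem_of_not_mem hk hs)]

lemma Units.sum_pow_sub_one_mul_mul_pow_mul_inv (hs : 0 ∉ s) :
    (∑ k ∈ s, (u : R) ^ (k - 1) * x k * (u : R) ^ k) * ((u⁻¹ : Rˣ) : R)
      = ∑ k ∈ s, (u : R) ^ (k - 1) * x k * (u : R) ^ (k - 1) := by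
  rw [sum_mul]
  refine sum_congr rfl fun k hk => ?_
  rw [mul_assoc, u.pow_mul_inv_of_ne_zero (ne_of_mem_of_not_mem hk hs)]

end Semiring

lemma isSelfAdjoint_pow_mul_mul_pow {R : Type*} [Ring R] [StarRing R] {d x : R}
    (hd : star d = -d) (hx : IsSelfAdjoint x) (m : ℕ) : IsSelfAdjoint (d ^ m * x * d ^ m) := by
  rw [IsSelfAdjoint, star_mul, star_mul, star_pow, hd, hx.star_eq, ← mul_assoc]
  rcases Nat.even_or_odd m with hm | hm
  · rw [hm.neg_pow]
  · rw [hm.neg_pow, neg_mul, neg_mul, mul_neg, neg_neg]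

lemma sum_range_succ_eq_add_sum_Icc {M : Type*} [AddCommMonoid M] (f : ℕ → M) (n : ℕ) :
    ∑ k ∈ range (n + 1), f k = f 0 + ∑ k ∈ Icc 1 n, f k := by
  rw [sum_range_eq_add_Ico f (by omega), Ico_add_one_right_eq_Icc]

theorem pos_part_of_dinv_mul_self_adjoint_general
    {V R : Type*} [CommRing V]
    [Ring R] [StarRing R]
    (ι : V →+* R)
    (d : Rˣ)
    (hstar_d : star ((d : R)) = -(d : R))
    (hstar_ι : ∀ v : V, star (ι v) = ι v)
    -- `pos` is the projection onto the nonnegative (differential-operator) part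
    (pos : R →+ R)
    (hposDO : ∀ x ∈ Subring.closure (Set.range ⇑ι ∪ {(d : R)}), pos x = x)
    (hpos_dinv : pos ((d⁻¹ : Rˣ) : R) = 0)
    (hneg : ∀ x : R, pos x = 0 → ∀ v : V,
      pos (ι v * x) = 0 ∧ pos (x * ι v) = 0 ∧
      pos (((d⁻¹ : Rˣ) : R) * x) = 0 ∧ pos (x * ((d⁻¹ : Rˣ) : R)) = 0)
    (n : ℕ) (a : ℕ → V) (N : R)
    (hN : pos N = 0)
    (X : R)
    (hXdef : X = (d : R) ^ (2 * n + 2)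
      + (∑ k ∈ Finset.range (n + 1), (d : R) ^ k * ι (a k) * (d : R) ^ k) + N) :
    pos (((d⁻¹ : Rˣ) : R) * X) * ((d⁻¹ : Rˣ) : R)
        = (d : R) ^ (2 * n)
          + ∑ k ∈ Finset.Icc 1 n, (d : R) ^ (k - 1) * ι (a k) * (d : R) ^ (k - 1) ∧
      star (pos (((d⁻¹ : Rˣ) : R) * X) * ((d⁻¹ : Rˣ) : R))
        = pos (((d⁻¹ : Rˣ) : R) * X) * ((d⁻¹ : Rˣ) : R) := by
  have hd_mem : (d : R) ∈ Subring.closure (Set.range ι ∪ {(d : R)}) :=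
    Subring.subset_closure (Or.inr rfl)
  have hι_mem (v : V) : ι v ∈ Subring.closure (Set.range ι ∪ {(d : R)}) :=
    Subring.subset_closure (Or.inl ⟨v, rfl⟩)
  have hX : X = ((d : R) ^ (2 * n + 2) + ∑ k ∈ Icc 1 n, (d : R) ^ k * ι (a k) * (d : R) ^ k)
      + (ι (a 0) + N) := by
    rw [hXdef, sum_range_succ_eq_add_sum_Icc, pow_zero, one_mul, mul_one]
    abel
  have hpos : pos (((d⁻¹ : Rˣ) : R) * X)
      = (d : R) ^ (2 * n + 1) + ∑ k ∈ Icc 1 n, (d : R) ^ (k - 1) * ι (a k) * (d : R) ^ k := by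
    have hneg_order : pos (((d⁻¹ : Rˣ) : R) * (ι (a 0) + N)) = 0 := by
      rw [mul_add, map_add, (hneg _ hpos_dinv (a 0)).2.1, (hneg N hN (a 0)).2.2.1, add_zero]
    rw [hX, mul_add, mul_add, d.inv_mul_pow_of_ne_zero (by omega),
      d.inv_mul_sum_pow_mul_mul_pow (s := Icc 1 n) _ (by simp), map_add, hneg_order, add_zero]
    refine hposDO _ (add_mem (pow_mem hd_mem _) (sum_mem fun k _ => ?_))
    exact mul_mem (mul_mem (pow_mem hd_mem _) (hι_mem _)) (pow_mem hd_mem _)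
  have hval : pos (((d⁻¹ : Rˣ) : R) * X) * ((d⁻¹ : Rˣ) : R)
      = (d : R) ^ (2 * n)
        + ∑ k ∈ Icc 1 n, (d : R) ^ (k - 1) * ι (a k) * (d : R) ^ (k - 1) := by
    rw [hpos, add_mul, d.pow_mul_inv_of_ne_zero (by omega),
      d.sum_pow_sub_one_mul_mul_pow_mul_inv (s := Icc 1 n) _ (by simp), Nat.add_sub_cancel]
  refine ⟨hval, hval ▸ IsSelfAdjoint.add ?_ (isSelfAdjoint_sum _ fun k _ =>
    isSelfAdjoint_pow_mul_mul_pow hstar_d (hstar_ι _) _)⟩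
  simpa [← pow_add, two_mul] using isSelfAdjoint_pow_mul_mul_pow hstar_d (.one R) n

/-- **Computation of `(∂⁻¹X)₊∂⁻¹` for a self-adjoint operator** (Lemma 2 of the paper).

`R` models the ring `V((∂⁻¹))` of pseudodifferential operators in `∂` over a commutative
differential algebra `V`.  The additive map `pos` is the projection `P ↦ P₊` onto the
subring of differential operators (the subring generated by `V` and `∂`): it fixes
differential operators, takes values in them, kills `∂⁻¹`, and the kernel
(the negative-order operators) is stable under multiplication by elements of `V` and
by `∂⁻¹` on either side.  If
`X = ∂^{2n+2} + ∂ⁿaₙ∂ⁿ + … + ∂a₁∂ + a₀ + N` is self-adjoint, with `N` of negative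
order, then `(∂⁻¹X)₊∂⁻¹ = ∂^{2n} + ∂^{n-1}aₙ∂^{n-1} + … + a₁`, and this differential
operator is self-adjoint. -/
theorem pos_part_of_dinv_mul_self_adjoint
    {V R : Type*} [CommRing V] [Algebra ℂ V]
    [Ring R] [StarRing R]
    (ι : V →+* R) (hι : Function.Injective ι)
    (d : Rˣ)
    (δ : Derivation ℂ V V)
    (hleib : ∀ v : V, (d : R) * ι v = ι v * (d : R) + ι (δ v))
    (hstar_d : star ((d : R)) = -(d : R))
    (hstar_ι : ∀ v : V, star (ι v) = ι v)
    -- `pos` is the projection onto the nonnegative (differential-operator) part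
    (pos : R →+ R)
    (hposDO : ∀ x ∈ Subring.closure (Set.range ⇑ι ∪ {(d : R)}), pos x = x)
    (hposmem : ∀ x : R, pos x ∈ Subring.closure (Set.range ⇑ι ∪ {(d : R)}))
    (hpos_dinv : pos ((d⁻¹ : Rˣ) : R) = 0)
    (hneg : ∀ x : R, pos x = 0 → ∀ v : V,
      pos (ι v * x) = 0 ∧ pos (x * ι v) = 0 ∧
      pos (((d⁻¹ : Rˣ) : R) * x) = 0 ∧ pos (x * ((d⁻¹ : Rˣ) : R)) = 0)
    (hnegmul : ∀ x y : R, pos x = 0 → pos y = 0 → pos (x * y) = 0)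
    (n : ℕ) (a : ℕ → V) (N : R)
    (hN : pos N = 0)
    (X : R)
    (hXdef : X = (d : R) ^ (2 * n + 2)
      + (∑ k ∈ Finset.range (n + 1), (d : R) ^ k * ι (a k) * (d : R) ^ k) + N)
    (hXsa : star X = X) :
    pos (((d⁻¹ : Rˣ) : R) * X) * ((d⁻¹ : Rˣ) : R)
        = (d : R) ^ (2 * n)
          + ∑ k ∈ Finset.Icc 1 n, (d : R) ^ (k - 1) * ι (a k) * (d : R) ^ (k - 1) ∧
      star (pos (((d⁻¹ : Rˣ) : R) * X) * ((d⁻¹ : Rˣ) : R))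
        = pos (((d⁻¹ : Rˣ) : R) * X) * ((d⁻¹ : Rˣ) : R) :=
  pos_part_of_dinv_mul_self_adjoint_general ι d hstar_d hstar_ι pos hposDO hpos_dinv hneg n a N hN X
    hXdef
end

section
/- Let L₁, L₂ be pseudodifferential operators with ∂ᵢLᵢ self-adjoint (∂ᵢLᵢ = −Lᵢ*∂ᵢ), i ∈ {1,2}, and H = ∂₁∂₂ + u. Then the relations ∂₂(L₁) = [L₁, ∂₁⁻¹u] and ∂₁(L₂) = [L₂, ∂₂⁻¹u] are equivalent to HL₁ = −L₁*H and HL₂ = −L₂*H respectively. -/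

private lemma helper_key {R : Type*} [Ring R] (A B : Rˣ) (U L s : R)
    (hs : (A : R) * L = s * (A : R)) :
    ((B : R) * L - L * (B : R)
        = L * (((A⁻¹ : Rˣ) : R) * U) - (((A⁻¹ : Rˣ) : R) * U) * L
      ↔ ((A : R) * (B : R) + U) * L = s * ((A : R) * (B : R) + U)) := by
  set C : R := ((A⁻¹ : Rˣ) : R) with hC
  have hAC : ∀ x : R, (A : R) * (C * x) = x := fun x => by
    rw [← mul_assoc, hC, Units.mul_inv, one_mul]
  have hCA : ∀ x : R, C * ((A : R) * x) = x := fun x => by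
    rw [← mul_assoc, hC, Units.inv_mul, one_mul]
  have hsC : s = (A : R) * L * C := by
    have : s * ((A : R) * C) = ((A : R) * L) * C := by
      rw [hs, mul_assoc]
    rwa [hC, Units.mul_inv, mul_one] at this
  rw [← Units.mul_right_inj A, ← sub_eq_zero, ← sub_eq_zero (b := s * _)]
  have key : (A : R) * ((B : R) * L - L * (B : R))
      - (A : R) * (L * (C * U) - (C * U) * L)
      = ((A : R) * (B : R) + U) * L - s * ((A : R) * (B : R) + U) := by
    rw [hsC]
    simp only [mul_sub, sub_mul, mul_add, add_mul, mul_assoc, hAC, hCA]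
    abel
  rw [key]

/-- **Equivalence of the defining relations with `HLᵢ = -Lᵢ*H`** (equations (2)–(4)
of the paper).

`R` models the ring of pseudodifferential operators in the two commuting invertible
derivation symbols `∂₁, ∂₂` over `V`; `H = ∂₁∂₂ + u`.  If `∂ᵢLᵢ` is self-adjoint
(`∂ᵢLᵢ = -Lᵢ*∂ᵢ`) for `i = 1, 2`, then `∂₂(L₁) = [L₁, ∂₁⁻¹u]`
(with `∂₂(L₁) = ∂₂L₁ - L₁∂₂`) is equivalent to `HL₁ = -L₁*H`, and symmetrically
`∂₁(L₂) = [L₂, ∂₂⁻¹u]` is equivalent to `HL₂ = -L₂*H`. -/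
theorem defining_relations_equiv_schrodinger_intertwining
    {V R : Type*} [CommRing V] [Algebra ℂ V]
    [Ring R] [StarRing R]
    (ι : V →+* R) (hι : Function.Injective ι)
    (d1 d2 : Rˣ)
    (δ1 δ2 : Derivation ℂ V V)
    (hleib1 : ∀ v : V, (d1 : R) * ι v = ι v * (d1 : R) + ι (δ1 v))
    (hleib2 : ∀ v : V, (d2 : R) * ι v = ι v * (d2 : R) + ι (δ2 v))
    (hdcomm : (d1 : R) * (d2 : R) = (d2 : R) * (d1 : R))
    (hstar_d1 : star ((d1 : R)) = -(d1 : R))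
    (hstar_d2 : star ((d2 : R)) = -(d2 : R))
    (hstar_ι : ∀ v : V, star (ι v) = ι v)
    (u : V) (L1 L2 : R)
    (hs1 : (d1 : R) * L1 = -(star L1) * (d1 : R))
    (hs2 : (d2 : R) * L2 = -(star L2) * (d2 : R)) :
    ((d2 : R) * L1 - L1 * (d2 : R)
        = L1 * (((d1⁻¹ : Rˣ) : R) * ι u) - (((d1⁻¹ : Rˣ) : R) * ι u) * L1
      ↔ ((d1 : R) * (d2 : R) + ι u) * L1
        = -(star L1) * ((d1 : R) * (d2 : R) + ι u)) ∧
    ((d1 : R) * L2 - L2 * (d1 : R)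
        = L2 * (((d2⁻¹ : Rˣ) : R) * ι u) - (((d2⁻¹ : Rˣ) : R) * ι u) * L2
      ↔ ((d1 : R) * (d2 : R) + ι u) * L2
        = -(star L2) * ((d1 : R) * (d2 : R) + ι u)) := by
  constructor
  · exact helper_key d1 d2 (ι u) L1 (-(star L1)) hs1
  · rw [hdcomm]
    exact helper_key d2 d1 (ι u) L2 (-(star L2)) hs2
end

section
/- Let L = ∂⁻¹(∂² + v₀ + ∂⁻¹v₁∂⁻¹ + ∂⁻²v₂∂⁻² + …) be a pseudodifferential operator in ∂ with ∂L self-adjoint. Then (L³)₊ = ∂³ + 3v₀∂ and (L⁵)₊ = ∂⁵ + 5v₀∂³ + 5∂(v₀)∂² + (5∂²(v₀) + 5v₁ + 10v₀²)∂. -/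
set_option maxHeartbeats 2000000 in
/-- **Computation of `(L³)₊` and `(L⁵)₊` for a BKP operator** (equations (6) of the
paper).

`R` models the ring `V((∂⁻¹))` of pseudodifferential operators in `∂` over a commutative
differential algebra `V`; `pos` is the projection `P ↦ P₊` onto the subring of
differential operators.  Let `L = ∂⁻¹(∂² + v₀ + ∂⁻¹v₁∂⁻¹ + ∂⁻²v₂∂⁻² + r)` with the
tail `r` of `∂`-order `≤ -6` (expressed as `(∂⁵·r)₊ = 0`) and `∂L` self-adjoint.  Then
`(L³)₊ = ∂³ + 3v₀∂` and
`(L⁵)₊ = ∂⁵ + 5v₀∂³ + 5∂(v₀)∂² + (5∂²(v₀) + 5v₁ + 10v₀²)∂`. -/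
theorem pos_parts_of_third_and_fifth_powers
    {V R : Type*} [CommRing V] [Algebra ℂ V]
    [Ring R] [StarRing R]
    (ι : V →+* R) (hι : Function.Injective ι)
    (d : Rˣ)
    (δ : Derivation ℂ V V)
    (hleib : ∀ v : V, (d : R) * ι v = ι v * (d : R) + ι (δ v))
    (hstar_d : star ((d : R)) = -(d : R))
    (hstar_ι : ∀ v : V, star (ι v) = ι v)
    (pos : R →+ R)
    (hposDO : ∀ x ∈ Subring.closure (Set.range ⇑ι ∪ {(d : R)}), pos x = x)
    (hposmem : ∀ x : R, pos x ∈ Subring.closure (Set.range ⇑ι ∪ {(d : R)}))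
    (hpos_dinv : pos ((d⁻¹ : Rˣ) : R) = 0)
    (hneg : ∀ x : R, pos x = 0 → ∀ v : V,
      pos (ι v * x) = 0 ∧ pos (x * ι v) = 0 ∧
      pos (((d⁻¹ : Rˣ) : R) * x) = 0 ∧ pos (x * ((d⁻¹ : Rˣ) : R)) = 0)
    (hnegmul : ∀ x y : R, pos x = 0 → pos y = 0 → pos (x * y) = 0)
    (v0 v1 v2 : V) (r : R)
    (hr : pos ((d : R) ^ 5 * r) = 0)
    (L : R)
    (hLdef : L = ((d⁻¹ : Rˣ) : R)
      * ((d : R) ^ 2 + ι v0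
        + ((d⁻¹ : Rˣ) : R) * ι v1 * ((d⁻¹ : Rˣ) : R)
        + ((d⁻¹ : Rˣ) : R) ^ 2 * ι v2 * ((d⁻¹ : Rˣ) : R) ^ 2 + r))
    (hsa : star ((d : R) * L) = (d : R) * L) :
    pos (L ^ 3) = (d : R) ^ 3 + ι (3 * v0) * (d : R) ∧
    pos (L ^ 5) = (d : R) ^ 5 + ι (5 * v0) * (d : R) ^ 3
      + ι (5 * δ v0) * (d : R) ^ 2
      + ι (5 * δ (δ v0) + 5 * v1 + 10 * v0 ^ 2) * (d : R) := by
  clear hsa hstar_d hstar_ι hι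
  set D : R := (d : R) with hDdef
  set e : R := ((d⁻¹ : Rˣ) : R) with hedef
  have hED : e * D = 1 := d.inv_mul
  have hDE : D * e = 1 := d.mul_inv
  have heDx : ∀ x : R, e * (D * x) = x := fun x => by rw [← mul_assoc, hED, one_mul]
  have hDex : ∀ x : R, D * (e * x) = x := fun x => by rw [← mul_assoc, hDE, one_mul]
  have hvD : ∀ v : V, ι v * D = D * ι v - ι (δ v) := fun v => by rw [hleib v]; abel
  have hevD : ∀ v : V, (e * ι v) * D = ι v - e * ι (δ v) := fun v => by
    rw [mul_assoc, hvD, mul_sub, heDx]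
  -- pos basics
  have Ne0 : pos e = 0 := hpos_dinv
  have Nv : ∀ (v : V) {x : R}, pos x = 0 → pos (ι v * x) = 0 := fun v {x} h => (hneg x h v).1
  have Nv' : ∀ (v : V) {x : R}, pos x = 0 → pos (x * ι v) = 0 := fun v {x} h => (hneg x h v).2.1
  have Ne : ∀ {x : R}, pos x = 0 → pos (e * x) = 0 := fun {x} h => (hneg x h 0).2.2.1
  have Ne' : ∀ {x : R}, pos x = 0 → pos (x * e) = 0 := fun {x} h => (hneg x h 0).2.2.2
  have hposS : ∀ {x : R}, x ∈ Subring.closure (Set.range ⇑ι ∪ {D}) → pos x = x :=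
    fun {x} h => hposDO x h
  have hDS : D ∈ Subring.closure (Set.range ⇑ι ∪ {D}) :=
    Subring.subset_closure (Or.inr rfl)
  have hvS : ∀ v : V, ι v ∈ Subring.closure (Set.range ⇑ι ∪ {D}) :=
    fun v => Subring.subset_closure (Or.inl ⟨v, rfl⟩)
  -- every differential operator is a sum of monomials ι w * D ^ k
  have hTmain : ∀ q ∈ Subring.closure (Set.range ⇑ι ∪ {D}),
      q ∈ AddSubgroup.closure {x : R | ∃ w k, x = ι w * D ^ k} := by
    have hmon : ∀ w k, ι w * D ^ k ∈ AddSubgroup.closure {x : R | ∃ w k, x = ι w * D ^ k} :=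
      fun w k => AddSubgroup.subset_closure ⟨w, k, rfl⟩
    have hdmul : ∀ x ∈ AddSubgroup.closure {x : R | ∃ w k, x = ι w * D ^ k},
        D * x ∈ AddSubgroup.closure {x : R | ∃ w k, x = ι w * D ^ k} := by
      intro x hx
      refine AddSubgroup.closure_induction (p := fun x _ =>
        D * x ∈ AddSubgroup.closure {x : R | ∃ w k, x = ι w * D ^ k}) ?_ ?_ ?_ ?_ hx
      · rintro x ⟨w, k, rfl⟩
        have h1 : D * (ι w * D ^ k) = ι w * D ^ (k+1) + ι (δ w) * D ^ k := by
          rw [← mul_assoc, hleib w, add_mul, mul_assoc, ← pow_succ']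
        rw [h1]; exact add_mem (hmon _ _) (hmon _ _)
      · simpa using AddSubgroup.zero_mem _
      · intro x y _ _ hx hy
        rw [mul_add]; exact add_mem hx hy
      · intro x _ hx
        rw [mul_neg]; exact neg_mem hx
    have hdpow : ∀ (k : ℕ) x, x ∈ AddSubgroup.closure {x : R | ∃ w k, x = ι w * D ^ k} →
        D ^ k * x ∈ AddSubgroup.closure {x : R | ∃ w k, x = ι w * D ^ k} := by
      intro k
      induction k with
      | zero => intro x hx; simpa using hx
      | succ k ih =>
        intro x hx
        have : D ^ (k+1) * x = D ^ k * (D * x) := by rw [pow_succ]; noncomm_ring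
        rw [this]; exact ih _ (hdmul _ hx)
    have hvmul : ∀ (v : V) x, x ∈ AddSubgroup.closure {x : R | ∃ w k, x = ι w * D ^ k} →
        ι v * x ∈ AddSubgroup.closure {x : R | ∃ w k, x = ι w * D ^ k} := by
      intro v x hx
      refine AddSubgroup.closure_induction (p := fun x _ =>
        ι v * x ∈ AddSubgroup.closure {x : R | ∃ w k, x = ι w * D ^ k}) ?_ ?_ ?_ ?_ hx
      · rintro x ⟨w, k, rfl⟩
        rw [← mul_assoc, ← map_mul]; exact hmon _ _
      · simpa using AddSubgroup.zero_mem _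
      · intro x y _ _ hx hy; rw [mul_add]; exact add_mem hx hy
      · intro x _ hx; rw [mul_neg]; exact neg_mem hx
    have hmul : ∀ x ∈ AddSubgroup.closure {x : R | ∃ w k, x = ι w * D ^ k},
        ∀ y ∈ AddSubgroup.closure {x : R | ∃ w k, x = ι w * D ^ k},
        x * y ∈ AddSubgroup.closure {x : R | ∃ w k, x = ι w * D ^ k} := by
      intro x hx
      refine AddSubgroup.closure_induction (p := fun x _ => ∀ y ∈ AddSubgroup.closure
        {x : R | ∃ w k, x = ι w * D ^ k}, x * y ∈ AddSubgroup.closure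
        {x : R | ∃ w k, x = ι w * D ^ k}) ?_ ?_ ?_ ?_ hx
      · rintro x ⟨w, k, rfl⟩ y hy
        rw [mul_assoc]; exact hvmul _ _ (hdpow _ _ hy)
      · intro y _; simpa using AddSubgroup.zero_mem _
      · intro x x' _ _ hx hx' y hy; rw [add_mul]; exact add_mem (hx y hy) (hx' y hy)
      · intro x _ hx y hy; rw [neg_mul]; exact neg_mem (hx y hy)
    intro q hq
    refine Subring.closure_induction (p := fun x _ =>
      x ∈ AddSubgroup.closure {x : R | ∃ w k, x = ι w * D ^ k}) ?_ ?_ ?_ ?_ ?_ ?_ hq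
    · rintro x (⟨v, rfl⟩ | rfl)
      · simpa using hmon v 0
      · simpa using hmon 1 1
    · exact AddSubgroup.zero_mem _
    · simpa using hmon 1 0
    · intro x y _ _ hx hy; exact add_mem hx hy
    · intro x _ hx; exact neg_mem hx
    · intro x y hx hy hx' hy'; exact hmul _ hx' _ hy'
  -- decomposition of differential operators
  have hdec : ∀ q ∈ Subring.closure (Set.range ⇑ι ∪ {D}),
      ∃ w Q, Q ∈ Subring.closure (Set.range ⇑ι ∪ {D}) ∧ q = ι w + Q * D := by
    intro q hq
    refine AddSubgroup.closure_induction (p := fun x _ =>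
      ∃ w Q, Q ∈ Subring.closure (Set.range ⇑ι ∪ {D}) ∧ x = ι w + Q * D) ?_ ?_ ?_ ?_
      (hTmain q hq)
    · rintro x ⟨w, k, rfl⟩
      cases k with
      | zero => exact ⟨w, 0, zero_mem _, by simp⟩
      | succ k =>
        refine ⟨0, ι w * D ^ k, mul_mem (hvS w) (pow_mem hDS k), ?_⟩
        rw [map_zero, zero_add, mul_assoc, ← pow_succ]
    · exact ⟨0, 0, zero_mem _, by simp⟩
    · rintro x y _ _ ⟨w, Q, hQ, rfl⟩ ⟨w', Q', hQ', rfl⟩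
      refine ⟨w + w', Q + Q', add_mem hQ hQ', ?_⟩
      rw [map_add, add_mul]; abel
    · rintro x _ ⟨w, Q, hQ, rfl⟩
      refine ⟨-w, -Q, neg_mem hQ, ?_⟩
      rw [map_neg, neg_mul]; abel
  -- key lemma A : if q is a DO with (q e)₊ = 0 then (e q)₊ = 0
  have lemA : ∀ q ∈ Subring.closure (Set.range ⇑ι ∪ {D}),
      pos (q * e) = 0 → pos (e * q) = 0 := by
    intro q hq hqe
    obtain ⟨w, Q, hQS, rfl⟩ := hdec q hq
    have h1 : (ι w + Q * D) * e = ι w * e + Q := by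
      rw [add_mul, mul_assoc, hDE, mul_one]
    have h2 : pos (ι w * e) = 0 := Nv w Ne0
    have h3 : Q = 0 := by
      have := hqe
      rw [h1, map_add, h2, zero_add, hposS hQS] at this
      exact this
    rw [h3, zero_mul, add_zero]
    exact Nv' w Ne0
  -- key lemma B : N is stable under x ↦ e * (x * D)
  have lemB : ∀ {n : R}, pos n = 0 → pos (e * (n * D)) = 0 := by
    intro n hn
    have hpS := hposmem (n * D)
    have hm : pos (n * D - pos (n * D)) = 0 := by
      rw [map_sub, hposS hpS, sub_self]
    have hpe : pos (pos (n * D) * e) = 0 := by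
      have h4 : pos (n * D) * e = n - (n * D - pos (n * D)) * e := by
        rw [sub_mul, mul_assoc, hDE, mul_one]; abel
      rw [h4, map_sub, hn, Ne' hm, sub_zero]
    have hep : pos (e * pos (n * D)) = 0 := lemA _ hpS hpe
    have h5 : e * (n * D) = e * pos (n * D) + e * (n * D - pos (n * D)) := by
      rw [← mul_add]; congr 1; abel
    rw [h5, map_add, hep, Ne hm, add_zero]
  -- iterated version
  have eNd : ∀ (k : ℕ) {x : R}, pos x = 0 → pos (e ^ k * x * D ^ k) = 0 := by
    intro k
    induction k with
    | zero => intro x hx; simpa using hx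
    | succ k ih =>
      intro x hx
      have h6 : e ^ (k+1) * x * D ^ (k+1) = e * ((e ^ k * x * D ^ k) * D) := by
        rw [pow_succ' e, pow_succ D]; noncomm_ring
      rw [h6]; exact lemB (ih hx)
  have hNepow : ∀ (k : ℕ) {x : R}, pos x = 0 → pos (e ^ k * x) = 0 := by
    intro k
    induction k with
    | zero => intro x hx; simpa using hx
    | succ k ih =>
      intro x hx
      have h7 : e ^ (k+1) * x = e * (e ^ k * x) := by rw [pow_succ']; noncomm_ring
      rw [h7]; exact Ne (ih hx)

  -- parametric commutation helpers
  have hDvx : ∀ (v : V) (x : R), D * (ι v * x) = ι v * (D * x) + ι (δ v) * x := by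
    intro v x; rw [← mul_assoc, hleib, add_mul, mul_assoc]
  have heva1 : ∀ v : V, e * (ι v * D) = ι v - e * ι (δ v) := by
    intro v; rw [← mul_assoc, hevD]
  have heva2 : ∀ v : V, e * (ι v * (D * D)) = ι v * D - ι (δ v) + e * ι (δ (δ v)) := by
    intro v
    rw [show e * (ι v * (D * D)) = (e * (ι v * D)) * D from by noncomm_ring, heva1, sub_mul,
      hevD]
    noncomm_ring
  have heva3 : ∀ v : V, e * (ι v * (D * (D * D)))
      = ι v * (D * D) - ι (δ v) * D + ι (δ (δ v)) - e * ι (δ (δ (δ v))) := by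
    intro v
    rw [show e * (ι v * (D * (D * D))) = (e * (ι v * (D * D))) * D from by noncomm_ring,
      heva2, add_mul, sub_mul, hevD]
    noncomm_ring
  have heva4 : ∀ v : V, e * (ι v * (D * (D * (D * D))))
      = ι v * (D * (D * D)) - ι (δ v) * (D * D) + ι (δ (δ v)) * D - ι (δ (δ (δ v)))
        + e * ι (δ (δ (δ (δ v)))) := by
    intro v
    rw [show e * (ι v * (D * (D * (D * D)))) = (e * (ι v * (D * (D * D)))) * D from by
      noncomm_ring, heva3, sub_mul, add_mul, sub_mul, hevD]
    noncomm_ring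
  -- powers of e against powers of D
  have hcancel : ∀ k : ℕ, e ^ k * D ^ k = 1 := by
    intro k; induction k with
    | zero => simp
    | succ k ih => rw [pow_succ e, pow_succ' D, mul_assoc, heDx]; exact ih
  -- the tail r
  set z : R := D ^ 5 * r with hzdef
  have hz : pos z = 0 := hr
  have hrz : r = e ^ 5 * z := by rw [hzdef, ← mul_assoc, hcancel, one_mul]
  have hNr : pos r = 0 := by rw [hrz]; exact hNepow 5 hz
  have hNrD : ∀ j k : ℕ, k ≤ j → pos (e ^ j * z * D ^ k) = 0 := by
    intro j k hkj
    obtain ⟨m, rfl⟩ := Nat.exists_eq_add_of_le hkj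
    rw [show e ^ (k + m) * z * D ^ k = e ^ m * (e ^ k * z * D ^ k) from by
      rw [show e ^ (k + m) = e ^ m * e ^ k from by rw [← pow_add, Nat.add_comm]]; noncomm_ring]
    exact hNepow m (eNd k hz)
  have hNr1 : pos (r * D) = 0 := by
    rw [hrz, show e ^ 5 * z * D = e ^ 4 * (e ^ 1 * z * D ^ 1) from by noncomm_ring]
    exact hNepow 4 (eNd 1 hz)
  have hNr2 : pos ((r * D) * D) = 0 := by
    rw [hrz, show e ^ 5 * z * D * D = e ^ 3 * (e ^ 2 * z * D ^ 2) from by noncomm_ring]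
    exact hNepow 3 (eNd 2 hz)
  have hNr3 : pos (((r * D) * D) * D) = 0 := by
    rw [hrz, show e ^ 5 * z * D * D * D = e ^ 2 * (e ^ 3 * z * D ^ 3) from by noncomm_ring]
    exact hNepow 2 (eNd 3 hz)
  have hNr4 : pos ((((r * D) * D) * D) * D) = 0 := by
    rw [hrz, show e ^ 5 * z * D * D * D * D = e ^ 1 * (e ^ 4 * z * D ^ 4) from by noncomm_ring]
    exact hNepow 1 (eNd 4 hz)
  have hDr : D * r = e ^ 4 * z := by
    rw [hrz, show e ^ 5 = e * e ^ 4 from (pow_succ' e 4), mul_assoc, hDex]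

  -- the pieces of L
  set c1 : R := e * (ι v1 * e) with hc1def
  set c2 : R := e * (e * (ι v2 * (e * e))) with hc2def
  set b : R := e * c1 + e * c2 + e * r with hbdef
  set a : R := e * ι v0 + b with hadef
  have hLa : L = D + a := by
    rw [hLdef, hadef, hbdef, hc1def, hc2def]
    have h8 : e * D ^ 2 = D := by rw [pow_two, ← mul_assoc, hED, one_mul]
    simp only [mul_add]
    rw [h8]
    simp only [pow_two, mul_assoc]
    abel
  -- basic membership facts
  have hNc1 : pos c1 = 0 := by rw [hc1def]; exact Ne (Nv v1 Ne0)
  have hNc2 : pos c2 = 0 := by rw [hc2def]; exact Ne (Ne (Nv v2 (Ne Ne0)))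
  have hNb : pos b = 0 := by
    rw [hbdef, map_add, map_add, Ne hNc1, Ne hNc2, Ne hNr]; norm_num
  have hNa : pos a = 0 := by
    rw [hadef, map_add, Nv' v0 Ne0, hNb]; norm_num
  -- right multiplications of the pieces by D
  have hc1D : c1 * D = e * ι v1 := by
    rw [hc1def]; simp only [mul_assoc, hED, mul_one]
  have hc1D2 : (c1 * D) * D = ι v1 - e * ι (δ v1) := by rw [hc1D, hevD]
  have hc1D3 : ((c1 * D) * D) * D = ι v1 * D - ι (δ v1) + e * ι (δ (δ v1)) := by
    rw [hc1D2, sub_mul, hevD]; noncomm_ring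
  have hc1D4 : (((c1 * D) * D) * D) * D
      = ι v1 * (D * D) - ι (δ v1) * D + ι (δ (δ v1)) - e * ι (δ (δ (δ v1))) := by
    rw [hc1D3, add_mul, sub_mul, hevD]; noncomm_ring
  have hc2D : c2 * D = e * (e * (ι v2 * e)) := by
    rw [hc2def]; simp only [mul_assoc, hED, mul_one]
  have hc2D2 : (c2 * D) * D = e * (e * ι v2) := by
    rw [hc2D]; simp only [mul_assoc, hED, mul_one]
  have hc2D3 : ((c2 * D) * D) * D = e * ι v2 - e * (e * ι (δ v2)) := by
    rw [hc2D2, mul_assoc, hevD, mul_sub]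
  have hNc2D : pos (c2 * D) = 0 := by rw [hc2D]; exact Ne (Ne (Nv v2 Ne0))
  have hNc2D2 : pos ((c2 * D) * D) = 0 := by rw [hc2D2]; exact Ne (Nv' v2 Ne0)
  have hNc2D3 : pos (((c2 * D) * D) * D) = 0 := by
    rw [hc2D3, map_sub, Nv' v2 Ne0, Ne (Nv' (δ v2) Ne0)]; norm_num
  -- left multiplications by D
  have hDb : D * b = c1 + c2 + r := by
    rw [hbdef]; simp only [mul_add, hDex]
  have hD2b : D * (D * b) = ι v1 * e + e * (ι v2 * (e * e)) + e ^ 4 * z := by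
    rw [hDb, hc1def, hc2def]
    simp only [mul_add, hDex]
    rw [hDr]
  have hD3b : D * (D * (D * b))
      = ι v1 + (ι (δ v1) * e + ι v2 * (e * e) + e ^ 3 * z) := by
    rw [hD2b]
    simp only [mul_add]
    rw [hDex, hDvx v1 e, hDE, mul_one,
      show D * (e ^ 4 * z) = e ^ 3 * z from by
        rw [show e ^ 4 = e * e ^ 3 from pow_succ' e 3, mul_assoc, hDex]]
    noncomm_ring
  have hD4b : D * (D * (D * (D * b)))
      = ι v1 * D + ι (δ v1)
        + (ι (δ v1) + ι (δ (δ v1)) * e + (ι v2 * e + ι (δ v2) * (e * e)) + e ^ 2 * z) := by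
    rw [hD3b]
    simp only [mul_add]
    rw [hleib v1, hDvx (δ v1) e, hDvx v2 (e*e), hDE, mul_one, hDex,
      show D * (e ^ 3 * z) = e ^ 2 * z from by
        rw [show e ^ 3 = e * e ^ 2 from pow_succ' e 2, mul_assoc, hDex]]
  have hND2b : pos (D * (D * b)) = 0 := by
    rw [hD2b, map_add, map_add, Nv v1 Ne0, Ne (Nv v2 (Ne Ne0)), hNepow 4 hz]; norm_num
  have hNDb : pos (D * b) = 0 := by
    rw [hDb, map_add, map_add, hNc1, hNc2, hNr]; norm_num
  -- a against D
  have hDa : D * a = ι v0 + D * b := by rw [hadef, mul_add, hDex]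
  have haD : a * D = ι v0 - e * ι (δ v0) + b * D := by rw [hadef, add_mul, hevD]
  have hbDsum : b * D = e * (c1 * D) + e * (c2 * D) + e * (r * D) := by
    rw [hbdef]; simp only [add_mul, mul_assoc]
  have hNbD : pos (b * D) = 0 := by
    rw [hbDsum, map_add, map_add, Ne (by rw [hc1D]; exact Nv' v1 Ne0 : pos (c1 * D) = 0),
      Ne hNc2D, Ne hNr1]
    norm_num
  have haD2 : a * (D * D) = ι v0 * D - ι (δ v0) + (e * ι (δ (δ v0)) + (b * D) * D) := by
    rw [show a * (D * D) = (a * D) * D from by noncomm_ring, haD, add_mul, sub_mul, hevD]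
    noncomm_ring
  have hNbDD : pos ((b * D) * D) = 0 := by
    rw [show (b * D) * D = (e * (c1 * D)) * D + (e * (c2 * D)) * D + (e * (r * D)) * D from by
      rw [hbDsum]; noncomm_ring]
    rw [map_add, map_add]
    rw [show (e * (c1 * D)) * D = e * ι v1 - e * (e * ι (δ v1)) from by
      rw [hc1D, mul_assoc, hevD, mul_sub]]
    rw [map_sub, Nv' v1 Ne0, Ne (Nv' (δ v1) Ne0)]
    rw [show (e * (c2 * D)) * D = e * ((c2 * D) * D) from by noncomm_ring, Ne hNc2D2]
    rw [show (e * (r * D)) * D = e * ((r * D) * D) from by noncomm_ring, Ne hNr2]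
    norm_num
  have hNaD : pos (a * D - ι v0) = 0 := by
    rw [haD, map_sub, map_add, map_sub, Nv' (δ v0) Ne0, hNbD]
    abel

  -- L squared
  set s : R := D * b + b * D + -(e * ι (δ v0)) + a * a with hsdef
  have hL2 : L ^ 2 = D ^ 2 + ι v0 + ι v0 + s := by
    rw [hsdef, hLa]
    calc (D + a) ^ 2 = D * D + D * a + (a * D + a * a) := by noncomm_ring
    _ = D * D + (ι v0 + D * b) + ((ι v0 - e * ι (δ v0) + b * D) + a * a) := by
        rw [hDa, haD]
    _ = D ^ 2 + ι v0 + ι v0 + (D * b + b * D + -(e * ι (δ v0)) + a * a) := by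
        rw [pow_two]; abel
  have Ps : pos s = 0 := by
    rw [hsdef, map_add, map_add, map_add, map_neg, hNDb, hNbD, Nv' (δ v0) Ne0,
      hnegmul a a hNa hNa]
    norm_num
  have hD2a : D * (D * a) = ι v0 * D + ι (δ v0) + D * (D * b) := by
    rw [hDa, mul_add, hleib]
  have hNDbD : pos ((D * b) * D) = 0 := by
    rw [show (D * b) * D = c1 * D + c2 * D + r * D from by rw [hDb]; noncomm_ring,
      map_add, map_add, (by rw [hc1D]; exact Nv' v1 Ne0 : pos (c1 * D) = 0), hNc2D, hNr1]
    norm_num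
  have hNaaD : pos (a * (a * D)) = 0 := by
    rw [show a * (a * D) = a * (a * D - ι v0) + a * ι v0 from by noncomm_ring,
      map_add, hnegmul _ _ hNa hNaD, Nv' v0 hNa]
    norm_num
  have hDs : D * s = -ι (δ v0) + (D * (D * b) + (D * b) * D + (ι v0 * a + (D * b) * a)) := by
    rw [hsdef, show D * (D * b + b * D + -(e * ι (δ v0)) + a * a)
      = D * (D * b) + (D * b) * D + -(D * (e * ι (δ v0))) + (D * a) * a from by noncomm_ring,
      hDex, hDa, add_mul]
    noncomm_ring
  have hNDsJ : pos (D * (D * b) + (D * b) * D + (ι v0 * a + (D * b) * a)) = 0 := by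
    rw [map_add, map_add, map_add, hND2b, hNDbD, Nv v0 hNa, hnegmul _ _ hNDb hNa]
    norm_num
  have hsD : s * D = -ι (δ v0) + (e * ι (δ (δ v0)) + ((D * b) * D + (b * D) * D + a * (a * D))) := by
    rw [hsdef, show (D * b + b * D + -(e * ι (δ v0)) + a * a) * D
      = (D * b) * D + (b * D) * D + -((e * ι (δ v0)) * D) + a * (a * D) from by noncomm_ring,
      hevD]
    noncomm_ring
  -- L cubed
  set t : R := D * (D * b) + (ι v0 * a + ι v0 * a)
    + (e * ι (δ (δ v0)) + ((D * b) * D + (b * D) * D + a * (a * D))) + s * a with htdef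
  have hL3 : L ^ 3 = D ^ 2 * D + (ι v0 * D + ι v0 * D + ι v0 * D) + t := by
    have h30 : L ^ 3 = L ^ 2 * L := by rw [← pow_succ]
    rw [h30, hL2, hLa]
    calc (D ^ 2 + ι v0 + ι v0 + s) * (D + a)
        = D ^ 2 * D + D * (D * a) + (ι v0 * D + ι v0 * a) + (ι v0 * D + ι v0 * a)
          + (s * D + s * a) := by noncomm_ring
    _ = D ^ 2 * D + (ι v0 * D + ι (δ v0) + D * (D * b)) + (ι v0 * D + ι v0 * a)
          + (ι v0 * D + ι v0 * a)
          + ((-ι (δ v0) + (e * ι (δ (δ v0)) + ((D * b) * D + (b * D) * D + a * (a * D))))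
            + s * a) := by rw [hD2a, hsD]
    _ = D ^ 2 * D + (ι v0 * D + ι v0 * D + ι v0 * D) + t := by rw [htdef]; abel
  have Pt : pos t = 0 := by
    rw [htdef]
    simp only [map_add]
    rw [hND2b, Nv v0 hNa, Nv' (δ (δ v0)) Ne0, hNDbD, hNbDD, hNaaD, hnegmul s a Ps hNa]
    norm_num
  have hposL3 : pos (L ^ 3) = D ^ 2 * D + (ι v0 * D + ι v0 * D + ι v0 * D) := by
    rw [hL3, map_add, map_add, Pt, add_zero, map_add, map_add,
      hposS (mul_mem (pow_mem hDS 2) hDS), hposS (mul_mem (hvS v0) hDS)]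
  constructor
  · rw [hposL3, show ι (3 * v0) = ι v0 + ι v0 + ι v0 from by
      rw [show (3 : V) * v0 = v0 + v0 + v0 from by ring, map_add, map_add]]
    noncomm_ring

  -- normal forms of D-multiples
  have hDv2 : ∀ v : V, D * (D * ι v)
      = ι v * (D * D) + (ι (δ v) * D + ι (δ v) * D) + ι (δ (δ v)) := by
    intro v
    simp only [hleib, hDvx, mul_add]
    abel
  have hDv3 : ∀ v : V, D * (D * (D * ι v))
      = ι v * (D * (D * D)) + (ι (δ v) * (D * D) + ι (δ v) * (D * D) + ι (δ v) * (D * D))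
        + (ι (δ (δ v)) * D + ι (δ (δ v)) * D + ι (δ (δ v)) * D) + ι (δ (δ (δ v))) := by
    intro v
    simp only [hleib, hDvx, mul_add]
    abel
  -- pos of D^4 b and (D^3 b) * D
  have hPA : pos (D * (D * (D * (D * b)))) = ι v1 * D + (ι (δ v1) + ι (δ v1)) := by
    rw [hD4b]
    simp only [map_add]
    rw [hposS (mul_mem (hvS v1) hDS), hposS (hvS (δ v1)), Nv (δ (δ v1)) Ne0, Nv v2 Ne0,
      Nv (δ v2) (Ne Ne0), hNepow 2 hz]
    abel
  have hNJ3 : pos (ι (δ v1) * e + ι v2 * (e * e) + e ^ 3 * z) = 0 := by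
    rw [map_add, map_add, Nv (δ v1) Ne0, Nv v2 (Ne Ne0), hNepow 3 hz]
    norm_num
  have hPB : pos ((D * (D * (D * b))) * D) = ι v1 * D + ι (δ v1) := by
    rw [show (D * (D * (D * b))) * D
        = ι v1 * D + ((ι (δ v1) * e) * D + (ι v2 * (e * e)) * D + e ^ 3 * z * D ^ 1) from by
      rw [hD3b]; noncomm_ring]
    rw [show (ι (δ v1) * e) * D = ι (δ v1) from by rw [mul_assoc, hED, mul_one],
      show (ι v2 * (e * e)) * D = ι v2 * e from by
        rw [mul_assoc, mul_assoc, hED, mul_one]]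
    simp only [map_add]
    rw [hposS (mul_mem (hvS v1) hDS), hposS (hvS (δ v1)), Nv v2 Ne0,
      hNrD 3 1 (by norm_num)]
    abel
  -- pos of (D^3 a) * a
  have hD3a : D * (D * (D * a))
      = ι v0 * (D * D) + ι (δ v0) * D + (ι (δ v0) * D + ι (δ (δ v0)))
        + D * (D * (D * b)) := by
    rw [hD2a]
    simp only [mul_add]
    rw [hDvx v0 D, hleib (δ v0)]
  have hPa1 : pos ((ι v0 * (D * D)) * a) = ι v0 * (ι v0 * D) + ι v0 * ι (δ v0) := by
    rw [show (ι v0 * (D * D)) * a = ι v0 * (D * (D * a)) from by noncomm_ring, hD2a,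
      mul_add, mul_add, map_add, map_add, Nv v0 hND2b,
      hposS (mul_mem (hvS v0) (mul_mem (hvS v0) hDS)),
      hposS (mul_mem (hvS v0) (hvS (δ v0))), add_zero]
  have hPa2 : pos ((ι (δ v0) * D) * a) = ι (δ v0) * ι v0 := by
    rw [mul_assoc, hDa, mul_add, map_add, Nv (δ v0) hNDb, add_zero,
      hposS (mul_mem (hvS (δ v0)) (hvS v0))]
  have hPa4 : pos ((D * (D * (D * b))) * a) = 0 := by
    rw [hD3b, add_mul, map_add, Nv v1 hNa, hnegmul _ _ hNJ3 hNa]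
    norm_num
  have hPD : pos ((D * (D * (D * a))) * a)
      = ι v0 * (ι v0 * D) + ι v0 * ι (δ v0) + (ι (δ v0) * ι v0 + ι (δ v0) * ι v0) := by
    rw [hD3a, add_mul, add_mul, add_mul, add_mul]
    simp only [map_add]
    rw [hPa1, hPa2, Nv (δ (δ v0)) hNa, hPa4]
    abel
  -- pos of (D^3) * s
  have hVC : pos ((D ^ 2 * D) * s)
      = (ι v1 * D + (ι (δ v1) + ι (δ v1))) + (ι v1 * D + ι (δ v1))
        + -(D * (D * ι (δ v0)))
        + (ι v0 * (ι v0 * D) + ι v0 * ι (δ v0) + (ι (δ v0) * ι v0 + ι (δ v0) * ι v0)) := by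
    rw [show (D ^ 2 * D) * s
        = D * (D * (D * (D * b))) + (D * (D * (D * b))) * D
          + -(D * (D * (D * (e * ι (δ v0))))) + (D * (D * (D * a))) * a from by
      rw [hsdef]; noncomm_ring]
    rw [show D * (D * (D * (e * ι (δ v0)))) = D * (D * ι (δ v0)) from by rw [hDex]]
    simp only [map_add, map_neg]
    rw [hPA, hPB, hPD, hposS (mul_mem hDS (mul_mem hDS (hvS (δ v0))))]

  have hVF : pos ((ι v0 * D) * s) = -(ι v0 * ι (δ v0)) := by
    rw [mul_assoc, hDs, mul_add, mul_neg, map_add, map_neg, Nv v0 hNDsJ, add_zero,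
      hposS (mul_mem (hvS v0) (hvS (δ v0)))]

  have hW1 : pos ((D * (D * b)) * D ^ 2) = ι v1 * D := by
    rw [show (D * (D * b)) * D ^ 2
        = (ι v1 * e) * (D * D) + e * (ι v2 * (e * (e * (D * D)))) + e ^ 2 * (e ^ 2 * z * D ^ 2)
        from by rw [hD2b]; noncomm_ring]
    rw [show (ι v1 * e) * (D * D) = ι v1 * D from by rw [mul_assoc, heDx],
      heDx, hED, mul_one]
    rw [map_add, map_add, hposS (mul_mem (hvS v1) hDS), Nv' v2 Ne0, hNepow 2 (eNd 2 hz)]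
    norm_num
  have hNhaD2J : pos (e * ι (δ (δ v0)) + (b * D) * D) = 0 := by
    rw [map_add, Nv' (δ (δ v0)) Ne0, hNbDD]; norm_num
  have hW2 : pos ((ι v0 * a) * D ^ 2) = ι v0 * (ι v0 * D) + -(ι v0 * ι (δ v0)) := by
    rw [show (ι v0 * a) * D ^ 2 = ι v0 * (a * (D * D)) from by noncomm_ring, haD2,
      mul_add, mul_sub, map_add, map_sub, Nv v0 hNhaD2J,
      hposS (mul_mem (hvS v0) (mul_mem (hvS v0) hDS)),
      hposS (mul_mem (hvS v0) (hvS (δ v0))), add_zero]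
    abel
  have hW4 : pos ((e * ι (δ (δ v0))) * D ^ 2) = ι (δ (δ v0)) * D + -(ι (δ (δ (δ v0)))) := by
    rw [show (e * ι (δ (δ v0))) * D ^ 2 = e * (ι (δ (δ v0)) * (D * D)) from by noncomm_ring,
      heva2, map_add, map_sub, hposS (mul_mem (hvS (δ (δ v0))) hDS),
      hposS (hvS (δ (δ (δ v0)))), Nv' (δ (δ (δ (δ v0)))) Ne0, add_zero]
    abel
  have hW5 : pos (((D * b) * D) * D ^ 2) = ι v1 * D + -(ι (δ v1)) := by
    rw [show ((D * b) * D) * D ^ 2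
        = ((c1 * D) * D) * D + ((c2 * D) * D) * D + ((r * D) * D) * D from by
      rw [hDb]; noncomm_ring, hc1D3]
    rw [map_add, map_add, hNc2D3, hNr3, map_add, map_sub,
      hposS (mul_mem (hvS v1) hDS), hposS (hvS (δ v1)), Nv' (δ (δ v1)) Ne0]
    abel
  have hW6 : pos (((b * D) * D) * D ^ 2) = ι v1 * D + (-(ι (δ v1)) + -(ι (δ v1))) := by
    have h61 : pos (e * ((((c1 * D) * D) * D) * D))
        = ι v1 * D + (-(ι (δ v1)) + -(ι (δ v1))) := by
      rw [show e * ((((c1 * D) * D) * D) * D)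
          = e * (ι v1 * (D * D)) - e * (e * (ι (δ v1) * (D * D))) from by
        rw [show (((c1 * D) * D) * D) * D = ((c1 * D) * D) * (D * D) from by noncomm_ring,
          hc1D2, sub_mul]; noncomm_ring]
      rw [heva2 v1, heva2 (δ v1), mul_add, mul_sub, heva1 (δ v1)]
      simp only [map_sub, map_add]
      rw [hposS (mul_mem (hvS v1) hDS), hposS (hvS (δ v1)), Nv' (δ (δ v1)) Ne0,
        Ne (Nv' (δ (δ (δ v1))) Ne0)]
      abel
    rw [show ((b * D) * D) * D ^ 2
        = e * ((((c1 * D) * D) * D) * D) + e * ((((c2 * D) * D) * D) * D)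
          + e * ((((r * D) * D) * D) * D) from by rw [hbDsum]; noncomm_ring]
    rw [map_add, map_add, h61, lemB hNc2D3, lemB hNr3]
    abel
  -- pieces for (a * (a * D)) * D ^ 2
  have haD3 : ((a * D) * D) * D
      = ι v0 * (D * D) - ι (δ v0) * D + (ι (δ (δ v0)) - e * ι (δ (δ (δ v0))))
        + ((b * D) * D) * D := by
    rw [show ((a * D) * D) * D = (a * (D * D)) * D from by noncomm_ring, haD2, add_mul,
      add_mul, sub_mul, hevD]
    noncomm_ring
  have hq1 : pos (a * (D * (D * ι v0))) = (ι v0 * D) * ι v0 - ι (δ v0) * ι v0 := by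
    rw [show a * (D * (D * ι v0)) = (a * (D * D)) * ι v0 from by noncomm_ring, haD2,
      add_mul, sub_mul, map_add, map_sub,
      hposS (mul_mem (mul_mem (hvS v0) hDS) (hvS v0)),
      hposS (mul_mem (hvS (δ v0)) (hvS v0)),
      (by rw [add_mul, map_add, Nv' v0 (Nv' (δ (δ v0)) Ne0), Nv' v0 hNbDD]; norm_num :
        pos ((e * ι (δ (δ v0)) + (b * D) * D) * ι v0) = 0), add_zero]
  have hq2 : pos (a * (D * ι (δ v0))) = ι v0 * ι (δ v0) := by
    rw [show a * (D * ι (δ v0)) = (a * D - ι v0) * ι (δ v0) + ι v0 * ι (δ v0) from by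
      noncomm_ring, map_add, Nv' (δ v0) hNaD, zero_add,
      hposS (mul_mem (hvS v0) (hvS (δ v0)))]
  have hq1' : pos (a * (ι v0 * (D * D)))
      = (ι v0 * D) * ι v0 - ι (δ v0) * ι v0 - ι v0 * ι (δ v0) - ι v0 * ι (δ v0) := by
    rw [show a * (ι v0 * (D * D))
        = a * (D * (D * ι v0)) - (a * (D * ι (δ v0)) + a * (D * ι (δ v0)))
          + a * ι (δ (δ v0)) from by rw [hDv2 v0, hleib (δ v0)]; noncomm_ring,
      map_add, map_sub, map_add, hq1, hq2, Nv' (δ (δ v0)) hNa, add_zero]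
    abel
  have hq2' : pos (a * (ι (δ v0) * D)) = ι v0 * ι (δ v0) := by
    rw [show a * (ι (δ v0) * D) = a * (D * ι (δ v0)) - a * ι (δ (δ v0)) from by
      rw [hleib (δ v0)]; noncomm_ring, map_sub, hq2, Nv' (δ (δ v0)) hNa, sub_zero]
  have hbD3e : ((b * D) * D) * D
      = e * (((c1 * D) * D) * D) + e * (((c2 * D) * D) * D) + e * (((r * D) * D) * D) := by
    rw [hbDsum]; noncomm_ring
  have hNbD3mv1 : pos (((b * D) * D) * D - ι v1) = 0 := by
    rw [hbD3e, hc1D3, mul_add, mul_sub, heva1 v1]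
    simp only [map_sub, map_add]
    rw [Nv' (δ v1) Ne0, Ne (Nv' (δ (δ v1)) Ne0), Ne hNc2D3, Ne hNr3,
      hposS (hvS v1)]
    abel
  have hq4 : pos (a * (((b * D) * D) * D)) = 0 := by
    rw [show a * (((b * D) * D) * D) = a * ((((b * D) * D) * D) - ι v1) + a * ι v1 from by
      noncomm_ring, map_add, hnegmul _ _ hNa hNbD3mv1, Nv' v1 hNa]
    norm_num
  have hW7 : pos ((a * (a * D)) * D ^ 2)
      = (ι v0 * D) * ι v0 - ι (δ v0) * ι v0 - ι v0 * ι (δ v0) - ι v0 * ι (δ v0)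
        - ι v0 * ι (δ v0) := by
    rw [show (a * (a * D)) * D ^ 2 = a * (((a * D) * D) * D) from by noncomm_ring, haD3,
      mul_add, mul_add, mul_sub, mul_sub]
    simp only [map_add, map_sub]
    rw [hq1', hq2', Nv' (δ (δ v0)) hNa, hnegmul _ _ hNa (Nv' (δ (δ (δ v0))) Ne0), hq4]
    abel
  have hsv0D : pos (s * (ι v0 * D)) = -(ι (δ v0) * ι v0) := by
    have hNsDJ : pos (e * ι (δ (δ v0)) + ((D * b) * D + (b * D) * D + a * (a * D))) = 0 := by
      rw [map_add, map_add, map_add, Nv' (δ (δ v0)) Ne0, hNDbD, hNbDD, hNaaD]; norm_num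
    rw [show s * (ι v0 * D) = (s * D) * ι v0 - s * ι (δ v0) from by
      rw [hvD v0]; noncomm_ring, hsD, add_mul, neg_mul, map_sub, map_add, map_neg,
      hposS (mul_mem (hvS (δ v0)) (hvS v0)), Nv' v0 hNsDJ, Nv' (δ v0) Ps]
    abel
  have hW8 : pos ((s * a) * D ^ 2) = -(ι (δ v0) * ι v0) := by
    rw [show (s * a) * D ^ 2 = s * (ι v0 * D) - s * ι (δ v0)
        + s * (e * ι (δ (δ v0)) + (b * D) * D) from by
      rw [show (s * a) * D ^ 2 = s * (a * (D * D)) from by noncomm_ring, haD2]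
      noncomm_ring,
      map_add, map_sub, hsv0D, Nv' (δ v0) Ps, hnegmul _ _ Ps hNhaD2J]
    abel
  have hWT : pos (t * D ^ 2)
      = ι v1 * D
        + ((ι v0 * (ι v0 * D) + -(ι v0 * ι (δ v0))) + (ι v0 * (ι v0 * D) + -(ι v0 * ι (δ v0))))
        + ((ι (δ (δ v0)) * D + -(ι (δ (δ (δ v0)))))
          + ((ι v1 * D + -(ι (δ v1))) + (ι v1 * D + (-(ι (δ v1)) + -(ι (δ v1))))
            + ((ι v0 * D) * ι v0 - ι (δ v0) * ι v0 - ι v0 * ι (δ v0) - ι v0 * ι (δ v0)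
              - ι v0 * ι (δ v0))))
        + -(ι (δ v0) * ι v0) := by
    rw [show t * D ^ 2
        = (D * (D * b)) * D ^ 2 + ((ι v0 * a) * D ^ 2 + (ι v0 * a) * D ^ 2)
          + ((e * ι (δ (δ v0))) * D ^ 2 + (((D * b) * D) * D ^ 2 + ((b * D) * D) * D ^ 2
            + (a * (a * D)) * D ^ 2)) + (s * a) * D ^ 2 from by rw [htdef]; noncomm_ring]
    simp only [map_add]
    rw [hW1, hW2, hW4, hW5, hW6, hW7, hW8]
  -- final assembly of (L^5)₊
  rw [show L ^ 5 = L ^ 3 * L ^ 2 from by rw [← pow_add], hL3, hL2,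
    show (D ^ 2 * D + (ι v0 * D + ι v0 * D + ι v0 * D) + t) * (D ^ 2 + ι v0 + ι v0 + s)
      = (D ^ 2 * D) * D ^ 2 + ((D ^ 2 * D) * ι v0 + (D ^ 2 * D) * ι v0) + (D ^ 2 * D) * s
        + ((ι v0 * D) * D ^ 2 + (ι v0 * D) * D ^ 2 + (ι v0 * D) * D ^ 2)
        + ((ι v0 * D) * ι v0 + (ι v0 * D) * ι v0 + (ι v0 * D) * ι v0 + (ι v0 * D) * ι v0
          + (ι v0 * D) * ι v0 + (ι v0 * D) * ι v0)
        + ((ι v0 * D) * s + (ι v0 * D) * s + (ι v0 * D) * s)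
        + (t * D ^ 2 + (t * ι v0 + t * ι v0) + t * s) from by noncomm_ring]
  simp only [map_add]
  rw [hVC, hVF, hWT, Nv' v0 Pt, hnegmul _ _ Pt Ps,
    hposS (mul_mem (mul_mem (pow_mem hDS 2) hDS) (pow_mem hDS 2)),
    hposS (mul_mem (mul_mem (pow_mem hDS 2) hDS) (hvS v0)),
    hposS (mul_mem (mul_mem (hvS v0) hDS) (pow_mem hDS 2)),
    hposS (mul_mem (mul_mem (hvS v0) hDS) (hvS v0))]
  -- now a pure differential-operator identity
  rw [show (D ^ 2 * D) * ι v0 = D * (D * (D * ι v0)) from by noncomm_ring, hDv3 v0,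
    show (ι v0 * D) * ι v0 = ι v0 * (ι v0 * D) + ι v0 * ι (δ v0) from by
      rw [mul_assoc, hleib v0, mul_add], hDv2 (δ v0),
    show ι (δ v0) * ι v0 = ι v0 * ι (δ v0) from by rw [← map_mul, ← map_mul, mul_comm]]
  simp only [map_add, map_mul, map_ofNat, map_pow]
  noncomm_ring
end

section
/- Let L be a pseudodifferential operator in ∂ over a commutative differential algebra, with A_n := (L^{2n+1})₊. Then for all n, m ≥ 0 the zero-curvature identity holds: [A_m, L^{2n+1}]₊ + [L^{2m+1}, A_n]₊ − [A_m, A_n] = 0. Equivalently, defining dA_n/dt_m := [A_m, L^{2n+1}]₊, one has dA_n/dt_m − dA_m/dt_n + [A_n, A_m] = 0. -/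
/-- **Zero-curvature identity for the positive parts** (first computation in Lemma 5
of the paper).

`R` models the ring `V((∂⁻¹))` of pseudodifferential operators in `∂` over a commutative
differential algebra `V`; `pos` is the projection `P ↦ P₊` onto the subring of
differential operators, whose kernel (the negative parts) is a subring without unit,
i.e. stable under multiplication.  With `Aₙ := (L^{2n+1})₊` one has, for all `n, m ≥ 0`,
`[Aₘ, L^{2n+1}]₊ + [L^{2m+1}, Aₙ]₊ - [Aₘ, Aₙ] = 0`, i.e. setting
`dAₙ/dtₘ := [Aₘ, L^{2n+1}]₊`, the zero-curvature equation
`dAₙ/dtₘ - dAₘ/dtₙ + [Aₙ, Aₘ] = 0` holds. -/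
theorem zero_curvature_identity
    {V R : Type*} [CommRing V] [Algebra ℂ V]
    [Ring R]
    (ι : V →+* R) (hι : Function.Injective ι)
    (d : Rˣ)
    (δ : Derivation ℂ V V)
    (hleib : ∀ v : V, (d : R) * ι v = ι v * (d : R) + ι (δ v))
    (pos : R →+ R)
    (hposDO : ∀ x ∈ Subring.closure (Set.range ⇑ι ∪ {(d : R)}), pos x = x)
    (hposmem : ∀ x : R, pos x ∈ Subring.closure (Set.range ⇑ι ∪ {(d : R)}))
    (hpos_dinv : pos ((d⁻¹ : Rˣ) : R) = 0)
    (hneg : ∀ x : R, pos x = 0 → ∀ v : V,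
      pos (ι v * x) = 0 ∧ pos (x * ι v) = 0 ∧
      pos (((d⁻¹ : Rˣ) : R) * x) = 0 ∧ pos (x * ((d⁻¹ : Rˣ) : R)) = 0)
    (hnegmul : ∀ x y : R, pos x = 0 → pos y = 0 → pos (x * y) = 0)
    (L : R) :
    ∀ n m : ℕ,
      pos (pos (L ^ (2 * m + 1)) * L ^ (2 * n + 1)
            - L ^ (2 * n + 1) * pos (L ^ (2 * m + 1)))
        + pos (L ^ (2 * m + 1) * pos (L ^ (2 * n + 1))
            - pos (L ^ (2 * n + 1)) * L ^ (2 * m + 1))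
        - (pos (L ^ (2 * m + 1)) * pos (L ^ (2 * n + 1))
            - pos (L ^ (2 * n + 1)) * pos (L ^ (2 * m + 1))) = 0 := by
  intro n m
  set S := Subring.closure (Set.range ⇑ι ∪ {(d : R)}) with hS
  set P := L ^ (2 * m + 1) with hP
  set Q := L ^ (2 * n + 1) with hQ
  have hPQ : P * Q = Q * P := by
    rw [hP, hQ, ← pow_add, ← pow_add]; ring_nf
  set a := pos P with ha
  set b := pos Q with hb
  have hid : ∀ x : R, pos (pos x) = pos x := fun x => hposDO _ (hposmem x)
  have hanull : pos (P - a) = 0 := by rw [map_sub, ha, hid, sub_self]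
  have hbnull : pos (Q - b) = 0 := by rw [map_sub, hb, hid, sub_self]
  have key : a * Q - Q * a + (P * b - b * P)
      = ((Q - b) * (P - a) - (P - a) * (Q - b)) + (a * b - b * a) := by
    have h : (a * Q - Q * a + (P * b - b * P))
        - (((Q - b) * (P - a) - (P - a) * (Q - b)) + (a * b - b * a))
        = P * Q - Q * P := by noncomm_ring
    have h0 : (a * Q - Q * a + (P * b - b * P))
        - (((Q - b) * (P - a) - (P - a) * (Q - b)) + (a * b - b * a)) = 0 := by
      rw [h, hPQ, sub_self]
    exact sub_eq_zero.mp h0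
  have hab : pos (a * b) = a * b :=
    hposDO _ (Subring.mul_mem _ (hposmem P) (hposmem Q))
  have hba : pos (b * a) = b * a :=
    hposDO _ (Subring.mul_mem _ (hposmem Q) (hposmem P))
  calc pos (a * Q - Q * a) + pos (P * b - b * P) - (a * b - b * a)
      = pos (a * Q - Q * a + (P * b - b * P)) - (a * b - b * a) := by
        rw [map_add]
    _ = pos (((Q - b) * (P - a) - (P - a) * (Q - b)) + (a * b - b * a))
          - (a * b - b * a) := by rw [key]
    _ = 0 := by
        rw [map_add, map_sub, hnegmul _ _ hbnull hanull,
          hnegmul _ _ hanull hbnull, map_sub, hab, hba]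
        abel
end

section
/- Let A₁ ∈ A[∂₁] and A₂ ∈ A[∂₂] be differential operators (in ∂₁ only and ∂₂ only, respectively), and H = ∂₁∂₂ + u. Then there exists a unique decomposition [A₁, A₂] = P∂₁ + Q∂₂ + a + R·H with P ∈ A[∂₁], Q ∈ A[∂₂], a ∈ A, and R ∈ A[∂₁, ∂₂]. -/
/-!
Every element of `A[∂₁, ∂₂]` is a finite sum of monomials `c ∂₁ⁱ ∂₂ʲ`, and for a lower set `s` of
exponents the monomials with exponents in `s` span a subgroup stable under right multiplication
by `A`: moving `c` to the left through `∂₁ⁱ ∂₂ʲ` only produces lower-order terms.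

Existence: `c ∂₁ⁱ⁺¹ ∂₂ʲ⁺¹ = (c ∂₁ⁱ ∂₂ʲ) H - c ∂₁ⁱ ∂₂ʲ u`, and the last term has total order at
most `i + j`, so induction on the total order decomposes every monomial, hence `[A₁, A₂]`.

Uniqueness: if `P ∂₁ + Q ∂₂ + a + W H = 0` with `W ≠ 0`, pick a monomial `∂₁ⁱ ∂₂ʲ` of `W` with
`i` maximal. By independence of the monomials, the coefficient of `∂₁ⁱ⁺¹ ∂₂ʲ⁺¹` must vanish, yet
only `W ∂₁ ∂₂` contributes to it. Once `W = 0`, the terms `P ∂₁`, `Q ∂₂` and `a` are supported on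
disjoint sets of exponents, so all three vanish.
-/

open Finsupp Set

section

variable {V R : Type*} [Ring V] [Ring R]

structure IsCommutingDerivationPair (ι : V →+* R) (d₁ d₂ : R) : Prop where
  commute : Commute d₁ d₂
  leibniz₁ : ∀ v, ∃ w, d₁ * ι v = ι v * d₁ + ι w
  leibniz₂ : ∀ v, ∃ w, d₂ * ι v = ι v * d₂ + ι w

section Monomials

variable (ι : V →+* R) (d₁ d₂ : R)

noncomputable def monomialSum : ((ℕ × ℕ) →₀ V) →+ R :=
  liftAddHom fun p => (AddMonoidHom.mulRight (d₂ ^ p.2)).comp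
    ((AddMonoidHom.mulRight (d₁ ^ p.1)).comp ι.toAddMonoidHom)

theorem monomialSum_single (p : ℕ × ℕ) (c : V) :
    monomialSum ι d₁ d₂ (single p c) = ι c * d₁ ^ p.1 * d₂ ^ p.2 := by
  simp [monomialSum]

noncomputable def monomialSpan (s : Set (ℕ × ℕ)) : AddSubgroup R :=
  (supported V V s).toAddSubgroup.map (monomialSum ι d₁ d₂)

variable {ι d₁ d₂} {s t : Set (ℕ × ℕ)}

theorem monomial_mem_monomialSpan {p : ℕ × ℕ} (hp : p ∈ s) (c : V) :
    ι c * d₁ ^ p.1 * d₂ ^ p.2 ∈ monomialSpan ι d₁ d₂ s :=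
  ⟨single p c, single_mem_supported V c hp, monomialSum_single ι d₁ d₂ p c⟩

theorem ι_mem_monomialSpan (hs : (0, 0) ∈ s) (c : V) : ι c ∈ monomialSpan ι d₁ d₂ s := by
  simpa using monomial_mem_monomialSpan (ι := ι) (d₁ := d₁) (d₂ := d₂) hs c

theorem d₁_mem_monomialSpan (hs : (1, 0) ∈ s) : d₁ ∈ monomialSpan ι d₁ d₂ s := by
  simpa using monomial_mem_monomialSpan (ι := ι) (d₁ := d₁) (d₂ := d₂) hs 1

theorem d₂_mem_monomialSpan (hs : (0, 1) ∈ s) : d₂ ∈ monomialSpan ι d₁ d₂ s := by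
  simpa using monomial_mem_monomialSpan (ι := ι) (d₁ := d₁) (d₂ := d₂) hs 1

theorem monomialSpan_le {K : AddSubgroup R}
    (h : ∀ p ∈ s, ∀ c : V, ι c * d₁ ^ p.1 * d₂ ^ p.2 ∈ K) : monomialSpan ι d₁ d₂ s ≤ K := by
  rintro _ ⟨f, hf, rfl⟩
  exact sum_mem fun p hp => h p ((mem_supported V f).1 hf hp) (f p)

theorem monomialSpan_mono (h : s ⊆ t) : monomialSpan ι d₁ d₂ s ≤ monomialSpan ι d₁ d₂ t :=
  monomialSpan_le fun _ hp c => monomial_mem_monomialSpan (h hp) c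

theorem ι_mul_mem_monomialSpan (c : V) {x : R} (hx : x ∈ monomialSpan ι d₁ d₂ s) :
    ι c * x ∈ monomialSpan ι d₁ d₂ s := by
  refine monomialSpan_le (K := (monomialSpan ι d₁ d₂ s).comap (AddMonoidHom.mulLeft (ι c)))
    (fun p hp c' => ?_) hx
  simpa [← mul_assoc] using monomial_mem_monomialSpan (ι := ι) (d₁ := d₁) (d₂ := d₂) hp (c * c')

theorem monomial_mul_pow_mul_pow (hd : Commute d₁ d₂) (c : V) (p q : ℕ × ℕ) :
    ι c * d₁ ^ p.1 * d₂ ^ p.2 * (d₁ ^ q.1 * d₂ ^ q.2)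
      = ι c * d₁ ^ (p + q).1 * d₂ ^ (p + q).2 := by
  rw [Prod.fst_add, Prod.snd_add, pow_add, pow_add, ← mul_assoc, mul_assoc _ (d₂ ^ p.2),
    ((hd.pow_pow q.1 p.2).symm).eq]
  noncomm_ring

theorem mul_mem_monomialSpan (hd : Commute d₁ d₂) {q : ℕ × ℕ} (h : ∀ p ∈ s, p + q ∈ t) {x : R}
    (hx : x ∈ monomialSpan ι d₁ d₂ s) : x * (d₁ ^ q.1 * d₂ ^ q.2) ∈ monomialSpan ι d₁ d₂ t := by
  refine monomialSpan_le (K := (monomialSpan ι d₁ d₂ t).comap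
    (AddMonoidHom.mulRight (d₁ ^ q.1 * d₂ ^ q.2))) (fun p hp c => ?_) hx
  simpa [monomial_mul_pow_mul_pow hd] using monomial_mem_monomialSpan (h p hp) c

theorem monomialSum_mapDomain_add (hd : Commute d₁ d₂) (f : (ℕ × ℕ) →₀ V) (q : ℕ × ℕ) :
    monomialSum ι d₁ d₂ (mapDomain (· + q) f) = monomialSum ι d₁ d₂ f * (d₁ ^ q.1 * d₂ ^ q.2) := by
  induction f using Finsupp.induction_linear with
  | zero => simp
  | add f g hf hg => rw [mapDomain_add, map_add, map_add, hf, hg, add_mul]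
  | single p c => rw [mapDomain_single, monomialSum_single, monomialSum_single,
      monomial_mul_pow_mul_pow hd]

theorem add_mem_of_mem_support (hd : Commute d₁ d₂)
    (hinj : Function.Injective (monomialSum ι d₁ d₂))
    {f : (ℕ × ℕ) →₀ V} {q : ℕ × ℕ}
    (h : monomialSum ι d₁ d₂ f * (d₁ ^ q.1 * d₂ ^ q.2) ∈ monomialSpan ι d₁ d₂ t) {p : ℕ × ℕ}
    (hp : p ∈ f.support) : p + q ∈ t := by
  obtain ⟨g, hg, hgf⟩ := h
  rw [← monomialSum_mapDomain_add hd] at hgf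
  obtain rfl := hinj hgf
  refine (mem_supported V _).1 hg ?_
  rw [Finset.mem_coe, mem_support_iff, mapDomain_apply (add_left_injective q)]
  exact mem_support_iff.1 hp

theorem eq_zero_of_mul_mem_monomialSpan (hd : Commute d₁ d₂)
    (hinj : Function.Injective (monomialSum ι d₁ d₂)) {x : R} (hx : x ∈ monomialSpan ι d₁ d₂ s)
    {q : ℕ × ℕ} (h : x * (d₁ ^ q.1 * d₂ ^ q.2) ∈ monomialSpan ι d₁ d₂ t) (ht : ∀ p, p + q ∉ t) :
    x = 0 := by
  obtain ⟨f, -, rfl⟩ := hx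
  rw [support_eq_empty.1 (Finset.eq_empty_of_forall_notMem fun p hp =>
    ht p (add_mem_of_mem_support hd hinj h hp)), map_zero]

end Monomials

section Leibniz

variable {ι : V →+* R} {d₁ d₂ : R}

theorem d₁_mul_mem_monomialSpan (hd : IsCommutingDerivationPair ι d₁ d₂) {a b : ℕ} {x : R}
    (hx : x ∈ monomialSpan ι d₁ d₂ (Iic (a, b))) :
    d₁ * x ∈ monomialSpan ι d₁ d₂ (Iic (a + 1, b)) := by
  refine monomialSpan_le (K := (monomialSpan ι d₁ d₂ _).comap (AddMonoidHom.mulLeft d₁))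
    (fun p hp c => ?_) hx
  obtain ⟨w, hw⟩ := hd.leibniz₁ c
  have h : d₁ * (ι c * d₁ ^ p.1 * d₂ ^ p.2)
      = ι c * d₁ ^ (p.1 + 1, p.2).1 * d₂ ^ (p.1 + 1, p.2).2 + ι w * d₁ ^ p.1 * d₂ ^ p.2 := by
    rw [← mul_assoc, ← mul_assoc, hw, pow_succ']
    noncomm_ring
  rw [AddSubgroup.mem_comap, AddMonoidHom.coe_mulLeft, h]
  exact add_mem
    (monomial_mem_monomialSpan (p := (p.1 + 1, p.2))
      (Prod.mk_le_mk.2 ⟨Nat.succ_le_succ hp.1, hp.2⟩) c)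
    (monomial_mem_monomialSpan (Prod.mk_le_mk.2 ⟨hp.1.trans a.le_succ, hp.2⟩) w)

theorem d₂_mul_mem_monomialSpan (hd : IsCommutingDerivationPair ι d₁ d₂) {a b : ℕ} {x : R}
    (hx : x ∈ monomialSpan ι d₁ d₂ (Iic (a, b))) :
    d₂ * x ∈ monomialSpan ι d₁ d₂ (Iic (a, b + 1)) := by
  refine monomialSpan_le (K := (monomialSpan ι d₁ d₂ _).comap (AddMonoidHom.mulLeft d₂))
    (fun p hp c => ?_) hx
  obtain ⟨w, hw⟩ := hd.leibniz₂ c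
  have h : d₂ * (ι c * d₁ ^ p.1 * d₂ ^ p.2)
      = ι c * d₁ ^ (p.1, p.2 + 1).1 * d₂ ^ (p.1, p.2 + 1).2 + ι w * d₁ ^ p.1 * d₂ ^ p.2 := by
    rw [← mul_assoc, ← mul_assoc, hw, pow_succ', add_mul, add_mul, mul_assoc (ι c) d₂,
      ← (hd.commute.pow_left p.1).eq]
    noncomm_ring
  rw [AddSubgroup.mem_comap, AddMonoidHom.coe_mulLeft, h]
  exact add_mem
    (monomial_mem_monomialSpan (p := (p.1, p.2 + 1))
      (Prod.mk_le_mk.2 ⟨hp.1, Nat.succ_le_succ hp.2⟩) c)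
    (monomial_mem_monomialSpan (Prod.mk_le_mk.2 ⟨hp.1, hp.2.trans b.le_succ⟩) w)

theorem pow_mul_pow_mul_ι_mem_monomialSpan (hd : IsCommutingDerivationPair ι d₁ d₂) (a b : ℕ)
    (v : V) : d₁ ^ a * d₂ ^ b * ι v ∈ monomialSpan ι d₁ d₂ (Iic (a, b)) := by
  induction a with
  | zero =>
    induction b with
    | zero =>
      simpa using ι_mem_monomialSpan (ι := ι) (d₁ := d₁) (d₂ := d₂) (self_mem_Iic (a := (0, 0))) v
    | succ b ih => simpa [pow_succ', mul_assoc] using d₂_mul_mem_monomialSpan hd ih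
  | succ a ih => simpa [pow_succ', mul_assoc] using d₁_mul_mem_monomialSpan hd ih

theorem mul_ι_mem_monomialSpan (hd : IsCommutingDerivationPair ι d₁ d₂) {s : Set (ℕ × ℕ)}
    (hs : IsLowerSet s) (v : V) {x : R} (hx : x ∈ monomialSpan ι d₁ d₂ s) :
    x * ι v ∈ monomialSpan ι d₁ d₂ s := by
  refine monomialSpan_le (K := (monomialSpan ι d₁ d₂ s).comap (AddMonoidHom.mulRight (ι v)))
    (fun p hp c => ?_) hx
  simpa [mul_assoc] using monomialSpan_mono (hs.Iic_subset hp)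
    (ι_mul_mem_monomialSpan c (pow_mul_pow_mul_ι_mem_monomialSpan hd p.1 p.2 v))

theorem mul_mem_monomialSpan_of_isLowerSet (hd : IsCommutingDerivationPair ι d₁ d₂)
    (s : AddSubmonoid (ℕ × ℕ)) (hs : IsLowerSet (s : Set (ℕ × ℕ))) {x y : R}
    (hx : x ∈ monomialSpan ι d₁ d₂ s) (hy : y ∈ monomialSpan ι d₁ d₂ s) :
    x * y ∈ monomialSpan ι d₁ d₂ s := by
  refine monomialSpan_le (K := (monomialSpan ι d₁ d₂ s).comap (AddMonoidHom.mulLeft x))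
    (fun q hq c => ?_) hy
  refine monomialSpan_le (K := (monomialSpan ι d₁ d₂ s).comap
    (AddMonoidHom.mulRight (ι c * d₁ ^ q.1 * d₂ ^ q.2))) (fun p hp c' => ?_) hx
  have h := mul_mem_monomialSpan hd.commute (t := s) (q := q)
    (fun r hr => hs (add_le_add_left hr q) (s.add_mem hp hq))
    (ι_mul_mem_monomialSpan c' (pow_mul_pow_mul_ι_mem_monomialSpan hd p.1 p.2 c))
  simpa [mul_assoc] using h

noncomputable def monomialSubring (hd : IsCommutingDerivationPair ι d₁ d₂)
    (s : AddSubmonoid (ℕ × ℕ)) (hs : IsLowerSet (s : Set (ℕ × ℕ))) : Subring R :=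
  { monomialSpan ι d₁ d₂ s with
    one_mem' := by simpa using ι_mem_monomialSpan (ι := ι) (d₁ := d₁) (d₂ := d₂) s.zero_mem 1
    mul_mem' := mul_mem_monomialSpan_of_isLowerSet hd s hs }

theorem mem_monomialSpan_of_mem_closure (hd : IsCommutingDerivationPair ι d₁ d₂)
    (s : AddSubmonoid (ℕ × ℕ)) (hs : IsLowerSet (s : Set (ℕ × ℕ))) {G : Set R}
    (hG : G ⊆ monomialSpan ι d₁ d₂ s) {x : R} (hx : x ∈ Subring.closure (range ι ∪ G)) :
    x ∈ monomialSpan ι d₁ d₂ s :=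
  Subring.closure_le (t := monomialSubring hd s hs) |>.2
    (union_subset (range_subset_iff.2 fun v => ι_mem_monomialSpan s.zero_mem v) hG) hx

end Leibniz

section Decomposition

variable {ι : V →+* R} {d₁ d₂ : R}

theorem mem_monomialSpan_of_mem_closure_d₁ (hd : IsCommutingDerivationPair ι d₁ d₂) {x : R}
    (hx : x ∈ Subring.closure (range ι ∪ {d₁})) : x ∈ monomialSpan ι d₁ d₂ {p | p.2 = 0} :=
  mem_monomialSpan_of_mem_closure hd (AddMonoidHom.mker (AddMonoidHom.snd ℕ ℕ))
    (fun _ _ hab ha => Nat.le_zero.1 (hab.2.trans ha.le))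
    (singleton_subset_iff.2 (d₁_mem_monomialSpan rfl)) hx

theorem mem_monomialSpan_of_mem_closure_d₂ (hd : IsCommutingDerivationPair ι d₁ d₂) {x : R}
    (hx : x ∈ Subring.closure (range ι ∪ {d₂})) : x ∈ monomialSpan ι d₁ d₂ {p | p.1 = 0} :=
  mem_monomialSpan_of_mem_closure hd (AddMonoidHom.mker (AddMonoidHom.fst ℕ ℕ))
    (fun _ _ hab ha => Nat.le_zero.1 (hab.1.trans ha.le))
    (singleton_subset_iff.2 (d₂_mem_monomialSpan rfl)) hx

theorem mem_monomialSpan_of_mem_closure_d₁_d₂ (hd : IsCommutingDerivationPair ι d₁ d₂) {x : R}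
    (hx : x ∈ Subring.closure (range ι ∪ {d₁, d₂})) : x ∈ monomialSpan ι d₁ d₂ univ :=
  mem_monomialSpan_of_mem_closure hd ⊤ (fun _ _ _ _ => trivial)
    (pair_subset (d₁_mem_monomialSpan (mem_univ _)) (d₂_mem_monomialSpan (mem_univ _))) hx

variable (ι d₁ d₂) in
def decomposableSubgroup (h : R) : AddSubgroup R where
  carrier := {x | ∃ P ∈ Subring.closure (range ι ∪ {d₁}), ∃ Q ∈ Subring.closure (range ι ∪ {d₂}),
    ∃ a : V, ∃ W ∈ Subring.closure (range ι ∪ {d₁, d₂}), x = P * d₁ + Q * d₂ + ι a + W * h}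
  add_mem' := by
    rintro _ _ ⟨P, hP, Q, hQ, a, W, hW, rfl⟩ ⟨P', hP', Q', hQ', a', W', hW', rfl⟩
    exact ⟨P + P', add_mem hP hP', Q + Q', add_mem hQ hQ', a + a', W + W', add_mem hW hW',
      by rw [map_add]; noncomm_ring⟩
  zero_mem' := ⟨0, zero_mem _, 0, zero_mem _, 0, 0, zero_mem _, by simp⟩
  neg_mem' := by
    rintro _ ⟨P, hP, Q, hQ, a, W, hW, rfl⟩
    exact ⟨-P, neg_mem hP, -Q, neg_mem hQ, -a, -W, neg_mem hW, by rw [map_neg]; noncomm_ring⟩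

theorem monomial_mem_decomposableSubgroup (hd : IsCommutingDerivationPair ι d₁ d₂) (u : V)
    (p : ℕ × ℕ) (c : V) :
    ι c * d₁ ^ p.1 * d₂ ^ p.2 ∈ decomposableSubgroup ι d₁ d₂ (d₁ * d₂ + ι u) := by
  induction hn : p.1 + p.2 using Nat.strong_induction_on generalizing p c with
  | _ n ih =>
  have hιc {G : Set R} : ι c ∈ Subring.closure (range ι ∪ G) :=
    Subring.subset_closure (Or.inl ⟨c, rfl⟩)
  obtain ⟨_ | a, _ | b⟩ := p
  · exact ⟨0, zero_mem _, 0, zero_mem _, c, 0, zero_mem _, by simp⟩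
  · refine ⟨0, zero_mem _, ι c * d₂ ^ b, ?_, 0, 0, zero_mem _, by simp [pow_succ, mul_assoc]⟩
    exact mul_mem hιc (pow_mem (Subring.subset_closure (by simp)) b)
  · refine ⟨ι c * d₁ ^ a, ?_, 0, zero_mem _, 0, 0, zero_mem _, by simp [pow_succ, mul_assoc]⟩
    exact mul_mem hιc (pow_mem (Subring.subset_closure (by simp)) a)
  · set m := ι c * d₁ ^ a * d₂ ^ b
    have hm : m ∈ Subring.closure (range ι ∪ {d₁, d₂}) :=
      mul_mem (mul_mem hιc (pow_mem (Subring.subset_closure (by simp)) a))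
        (pow_mem (Subring.subset_closure (by simp)) b)
    have hmu : m * ι u ∈ decomposableSubgroup ι d₁ d₂ (d₁ * d₂ + ι u) :=
      monomialSpan_le (s := Iic (a, b))
        (fun r hr c' => ih (r.1 + r.2) (by have := hr.1; have := hr.2; simp at hn; omega) r c'
          rfl)
        (mul_ι_mem_monomialSpan hd (isLowerSet_Iic _) u
          (monomial_mem_monomialSpan (mem_Iic.2 le_rfl) c))
    have e : ι c * d₁ ^ (a + 1) * d₂ ^ (b + 1) = m * (d₁ * d₂ + ι u) - m * ι u := by
      rw [mul_add, add_sub_cancel_right]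
      simpa using (monomial_mul_pow_mul_pow hd.commute c (a, b) (1, 1)).symm
    rw [e]
    exact sub_mem ⟨0, zero_mem _, 0, zero_mem _, 0, m, hm, by simp⟩ hmu

theorem eq_zero_of_mul_mem_monomialSpan_axes (hd : IsCommutingDerivationPair ι d₁ d₂)
    (hinj : Function.Injective (monomialSum ι d₁ d₂)) (u : V) {W : R}
    (hW : W ∈ monomialSpan ι d₁ d₂ univ)
    (h : W * (d₁ * d₂ + ι u) ∈ monomialSpan ι d₁ d₂ {p | p.1 = 0 ∨ p.2 = 0}) : W = 0 := by
  obtain ⟨r, -, rfl⟩ := hW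
  rcases eq_or_ne r 0 with rfl | hr
  · exact map_zero _
  obtain ⟨s, hs, hmax⟩ := r.support.exists_max_image Prod.fst (support_nonempty_iff.2 hr)
  have hWu : monomialSum ι d₁ d₂ r * ι u ∈ monomialSpan ι d₁ d₂ {p | p.1 ≤ s.1} :=
    mul_ι_mem_monomialSpan hd (fun _ _ hab ha => hab.1.trans ha) u
      ⟨r, (mem_supported V r).2 hmax, rfl⟩
  have hmul : monomialSum ι d₁ d₂ r * (d₁ ^ (1, 1).1 * d₂ ^ (1, 1).2)
      ∈ monomialSpan ι d₁ d₂ {p | p.1 ≤ s.1 ∨ p.2 = 0} := by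
    rw [pow_one, pow_one, ← add_sub_cancel_right (d₁ * d₂) (ι u), mul_sub]
    refine sub_mem (monomialSpan_mono (fun p hp => ?_) h) (monomialSpan_mono (fun _ => Or.inl) hWu)
    simp only [mem_ofPred_eq] at hp ⊢
    omega
  simpa using add_mem_of_mem_support hd.commute hinj hmul hs

theorem eq_zero_of_decomposition_eq_zero (hd : IsCommutingDerivationPair ι d₁ d₂)
    (hinj : Function.Injective (monomialSum ι d₁ d₂)) (u : V) {P Q A W : R}
    (hP : P ∈ Subring.closure (range ι ∪ {d₁})) (hQ : Q ∈ Subring.closure (range ι ∪ {d₂}))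
    (hA : A ∈ range ι) (hW : W ∈ Subring.closure (range ι ∪ {d₁, d₂}))
    (h : P * d₁ + Q * d₂ + A + W * (d₁ * d₂ + ι u) = 0) : P = 0 ∧ Q = 0 ∧ A = 0 ∧ W = 0 := by
  have hd₁ : d₁ ∈ Subring.closure (range ι ∪ {d₁}) := Subring.subset_closure (by simp)
  have hd₂ : d₂ ∈ Subring.closure (range ι ∪ {d₂}) := Subring.subset_closure (by simp)
  have hA₁ : A ∈ Subring.closure (range ι ∪ {d₁}) := Subring.subset_closure (Or.inl hA)
  have hA₂ : A ∈ Subring.closure (range ι ∪ {d₂}) := Subring.subset_closure (Or.inl hA)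
  obtain rfl : W = 0 := by
    refine eq_zero_of_mul_mem_monomialSpan_axes hd hinj u
      (mem_monomialSpan_of_mem_closure_d₁_d₂ hd hW) ?_
    rw [show W * (d₁ * d₂ + ι u) = -(P * d₁ + A + Q * d₂) by
      rw [eq_neg_iff_add_eq_zero, ← h]; abel]
    exact neg_mem (add_mem
      (monomialSpan_mono (fun _ => Or.inr)
        (mem_monomialSpan_of_mem_closure_d₁ hd (add_mem (mul_mem hP hd₁) hA₁)))
      (monomialSpan_mono (fun _ => Or.inl)
        (mem_monomialSpan_of_mem_closure_d₂ hd (mul_mem hQ hd₂))))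
  simp only [zero_mul, add_zero] at h
  obtain rfl : P = 0 := by
    refine eq_zero_of_mul_mem_monomialSpan hd.commute hinj (q := (1, 0)) (t := {p | p.1 = 0})
      (mem_monomialSpan_of_mem_closure_d₁ hd hP) ?_ (fun p => by simp)
    rw [show P * (d₁ ^ (1, 0).1 * d₂ ^ (1, 0).2) = P * d₁ by simp,
      eq_neg_of_add_eq_zero_left ((add_assoc _ _ _).symm.trans h)]
    exact neg_mem (mem_monomialSpan_of_mem_closure_d₂ hd (add_mem (mul_mem hQ hd₂) hA₂))
  rw [zero_mul, zero_add] at h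
  obtain rfl : Q = 0 := by
    refine eq_zero_of_mul_mem_monomialSpan hd.commute hinj (q := (0, 1)) (t := {p | p.2 = 0})
      (mem_monomialSpan_of_mem_closure_d₂ hd hQ) ?_ (fun p => by simp)
    rw [show Q * (d₁ ^ (0, 1).1 * d₂ ^ (0, 1).2) = Q * d₂ by simp,
      eq_neg_of_add_eq_zero_left h]
    exact neg_mem (mem_monomialSpan_of_mem_closure_d₁ hd hA₁)
  exact ⟨rfl, rfl, by simpa using h, rfl⟩

end Decomposition

end

theorem unique_decomposition_of_commutator_general
    {V R : Type*} [CommRing V] [Algebra ℂ V]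
    [Ring R]
    (ι : V →+* R)
    (d1 d2 : R)
    (δ1 δ2 : Derivation ℂ V V)
    (hleib1 : ∀ v : V, d1 * ι v = ι v * d1 + ι (δ1 v))
    (hleib2 : ∀ v : V, d2 * ι v = ι v * d2 + ι (δ2 v))
    (hdcomm : d1 * d2 = d2 * d1)
    -- the monomials `v ∂₁ⁱ ∂₂ʲ` are linearly independent
    (hindep : ∀ f : (ℕ × ℕ) →₀ V,
      (f.sum fun p c => ι c * d1 ^ p.1 * d2 ^ p.2) = 0 → f = 0)
    (u : V) (A1 A2 : R)
    (hA1 : A1 ∈ Subring.closure (Set.range ⇑ι ∪ {d1}))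
    (hA2 : A2 ∈ Subring.closure (Set.range ⇑ι ∪ {d2})) :
    ∃! x : R × R × R × R,
      x.1 ∈ Subring.closure (Set.range ⇑ι ∪ {d1}) ∧
      x.2.1 ∈ Subring.closure (Set.range ⇑ι ∪ {d2}) ∧
      x.2.2.1 ∈ Set.range ⇑ι ∧
      x.2.2.2 ∈ Subring.closure (Set.range ⇑ι ∪ {d1, d2}) ∧
      A1 * A2 - A2 * A1
        = x.1 * d1 + x.2.1 * d2 + x.2.2.1 + x.2.2.2 * (d1 * d2 + ι u) := by
  have hd : IsCommutingDerivationPair ι d1 d2 :=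
    ⟨hdcomm, fun v => ⟨δ1 v, hleib1 v⟩, fun v => ⟨δ2 v, hleib2 v⟩⟩
  have hinj : Function.Injective (monomialSum ι d1 d2) :=
    (injective_iff_map_eq_zero _).2 hindep
  have hcl₁ : Subring.closure (range ι ∪ {d1}) ≤ Subring.closure (range ι ∪ {d1, d2}) :=
    Subring.closure_mono (union_subset_union_right _ (by simp))
  have hcl₂ : Subring.closure (range ι ∪ {d2}) ≤ Subring.closure (range ι ∪ {d1, d2}) :=
    Subring.closure_mono (union_subset_union_right _ (by simp))
  obtain ⟨P, hP, Q, hQ, a, W, hW, he⟩ := monomialSpan_le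
    (fun p _ c => monomial_mem_decomposableSubgroup hd u p c)
    (mem_monomialSpan_of_mem_closure_d₁_d₂ hd (sub_mem (mul_mem (hcl₁ hA1) (hcl₂ hA2))
      (mul_mem (hcl₂ hA2) (hcl₁ hA1))))
  refine ⟨(P, Q, ι a, W), ⟨hP, hQ, ⟨a, rfl⟩, hW, he⟩, ?_⟩
  rintro ⟨P', Q', _, W'⟩ ⟨hP', hQ', ⟨a', rfl⟩, hW', he'⟩
  obtain ⟨hPP, hQQ, haa, hWW⟩ := eq_zero_of_decomposition_eq_zero hd hinj u
    (sub_mem hP' hP) (sub_mem hQ' hQ) ⟨a' - a, map_sub ι a' a⟩ (sub_mem hW' hW)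
    (by rw [← sub_eq_zero.2 (he'.symm.trans he)]; noncomm_ring)
  simp only [sub_eq_zero] at hPP hQQ haa hWW
  simp [hPP, hQQ, haa, hWW]

/-- **Unique decomposition of `[A₁, A₂]`** (equation (9) of the paper).

`R` models the ring `A[∂₁, ∂₂]` of differential operators in two commuting derivations
over a commutative domain `A` (embedded by `ι`); the monomials `ι(c)·∂₁ⁱ∂₂ʲ` are linearly
independent.  For differential operators `A₁ ∈ A[∂₁]` and `A₂ ∈ A[∂₂]` and
`H = ∂₁∂₂ + u`, there is a unique decomposition
`[A₁, A₂] = P∂₁ + Q∂₂ + a + R'·H` with `P ∈ A[∂₁]`, `Q ∈ A[∂₂]`, `a ∈ A` and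
`R' ∈ A[∂₁, ∂₂]`. -/
theorem unique_decomposition_of_commutator
    {V R : Type*} [CommRing V] [IsDomain V] [Algebra ℂ V]
    [Ring R]
    (ι : V →+* R) (hι : Function.Injective ι)
    (d1 d2 : R)
    (δ1 δ2 : Derivation ℂ V V)
    (hleib1 : ∀ v : V, d1 * ι v = ι v * d1 + ι (δ1 v))
    (hleib2 : ∀ v : V, d2 * ι v = ι v * d2 + ι (δ2 v))
    (hdcomm : d1 * d2 = d2 * d1)
    (hδcomm : ∀ v : V, δ1 (δ2 v) = δ2 (δ1 v))
    -- the monomials `v ∂₁ⁱ ∂₂ʲ` are linearly independent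
    (hindep : ∀ f : (ℕ × ℕ) →₀ V,
      (f.sum fun p c => ι c * d1 ^ p.1 * d2 ^ p.2) = 0 → f = 0)
    (u : V) (A1 A2 : R)
    (hA1 : A1 ∈ Subring.closure (Set.range ⇑ι ∪ {d1}))
    (hA2 : A2 ∈ Subring.closure (Set.range ⇑ι ∪ {d2})) :
    ∃! x : R × R × R × R,
      x.1 ∈ Subring.closure (Set.range ⇑ι ∪ {d1}) ∧
      x.2.1 ∈ Subring.closure (Set.range ⇑ι ∪ {d2}) ∧
      x.2.2.1 ∈ Set.range ⇑ι ∧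
      x.2.2.2 ∈ Subring.closure (Set.range ⇑ι ∪ {d1, d2}) ∧
      A1 * A2 - A2 * A1
        = x.1 * d1 + x.2.1 * d2 + x.2.2.1 + x.2.2.2 * (d1 * d2 + ι u) :=
  unique_decomposition_of_commutator_general ι d1 d2 δ1 δ2 hleib1 hleib2 hdcomm hindep u A1 A2 hA1
    hA2
end

section
/- Suppose differential operators A₁ ∈ A[∂₁], A₂ ∈ A[∂₂] satisfy H·Aᵢ + Aᵢ*·H = Aᵢ*(u) for i = 1, 2 where H = ∂₁∂₂ + u, and suppose [A₁, A₂] = P∂₁ + Q∂₂ + R·H with P ∈ A[∂₁], Q ∈ A[∂₂], R ∈ A[∂₁,∂₂]. If A is a domain, then R is skew-adjoint: R + R* = 0. -/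
/-!
Write operators in the normal form `∑ ι c * ∂₁ⁱ * ∂₂ʲ`, unique by independence of the monomials,
and track the exponents `(i, j)` that occur. Moving `∂₁, ∂₂` past `ι c` only creates terms of lower
order, so orders add under products and the adjoint preserves order. Combining `H Aᵢ + Aᵢ* H = wᵢ`
with the decomposition of `[A₁, A₂]` and its adjoint gives
`H (R + R*) H = (w₁A₂ + A₂*w₁ - H Q ∂₂ + ∂₂ Q* H) - (w₂A₁ + A₁*w₂ + H P ∂₁ - ∂₁ P* H)`,
whose exponents all satisfy `i ≤ 1 ∨ j ≤ 1`. But if `R + R*` had a nonzero coefficient at an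
exponent `p` of maximal total degree `n`, then `H (R + R*) H ≡ (R + R*) ∂₁²∂₂²` up to total order
`n + 3`, so `H (R + R*) H` would have the same coefficient at `p + (2, 2)`.
-/

namespace DiffOperator

open Set

variable {V R : Type*} [CommRing V] [Ring R] (ι : V →+* R) (d1 d2 : R)

def monomial (c : V) (p : ℕ × ℕ) : R := ι c * d1 ^ p.1 * d2 ^ p.2

noncomputable def ofCoeffs : ((ℕ × ℕ) →₀ V) →+ R where
  toFun f := f.sum fun p c => monomial ι d1 d2 c p
  map_zero' := Finsupp.sum_zero_index
  map_add' _ _ := Finsupp.sum_add_index' (fun _ => by simp [monomial])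
    (fun _ _ _ => by simp [monomial, add_mul])

noncomputable def supported (s : Set (ℕ × ℕ)) : AddSubgroup R :=
  (Finsupp.supported V V s).toAddSubgroup.map (ofCoeffs ι d1 d2)

/-- `A[∂₁]` is `orderLE ι d1 d2 (.snd ℕ ℕ) 0` and `A[∂₂]` is `orderLE ι d1 d2 (.fst ℕ ℕ) 0`. -/
noncomputable def orderLE (w : ℕ × ℕ →+ ℕ) (n : ℕ) : AddSubgroup R :=
  supported ι d1 d2 {p | w p ≤ n}

variable {ι d1 d2} {s s₁ s₂ : Set (ℕ × ℕ)} {x y : R}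

theorem ofCoeffs_apply (f : (ℕ × ℕ) →₀ V) :
    ofCoeffs ι d1 d2 f = f.sum fun p c => monomial ι d1 d2 c p := rfl

theorem ofCoeffs_single (p : ℕ × ℕ) (c : V) :
    ofCoeffs ι d1 d2 (Finsupp.single p c) = monomial ι d1 d2 c p :=
  Finsupp.sum_single_index (h := fun p c => monomial ι d1 d2 c p) (by simp [monomial])

theorem mem_supported :
    x ∈ supported ι d1 d2 s ↔ ∃ f : (ℕ × ℕ) →₀ V, ↑f.support ⊆ s ∧ ofCoeffs ι d1 d2 f = x := by
  simp [supported, Finsupp.mem_supported]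

theorem monomial_mem_supported {p : ℕ × ℕ} (hp : p ∈ s) (c : V) :
    monomial ι d1 d2 c p ∈ supported ι d1 d2 s :=
  mem_supported.2 ⟨_, fun _ hq => Finset.mem_singleton.1 (Finsupp.support_single_subset hq) ▸ hp,
    ofCoeffs_single p c⟩

theorem supported_mono (h : s₁ ⊆ s₂) : supported ι d1 d2 s₁ ≤ supported ι d1 d2 s₂ :=
  AddSubgroup.map_mono (Finsupp.supported_mono (M := V) (R := V) h)

theorem supported_le {G : AddSubgroup R} (h : ∀ p ∈ s, ∀ c, monomial ι d1 d2 c p ∈ G) :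
    supported ι d1 d2 s ≤ G := by
  intro x hx
  obtain ⟨f, hf, rfl⟩ := mem_supported.1 hx
  exact G.sum_mem fun p hp => h p (hf hp) _

theorem support_subset_of_ofCoeffs_mem (hinj : Function.Injective (ofCoeffs ι d1 d2))
    {f : (ℕ × ℕ) →₀ V} (h : ofCoeffs ι d1 d2 f ∈ supported ι d1 d2 s) : ↑f.support ⊆ s := by
  obtain ⟨g, hg, hgf⟩ := mem_supported.1 h
  exact hinj hgf ▸ hg

theorem one_mem_supported (h : (0, 0) ∈ s) : (1 : R) ∈ supported ι d1 d2 s := by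
  simpa [monomial] using monomial_mem_supported (ι := ι) (d1 := d1) (d2 := d2) h 1

theorem iota_mem_supported (h : (0, 0) ∈ s) (c : V) : ι c ∈ supported ι d1 d2 s := by
  simpa [monomial] using monomial_mem_supported (d1 := d1) (d2 := d2) h c

theorem d1_mem_supported (h : (1, 0) ∈ s) : d1 ∈ supported ι d1 d2 s := by
  simpa [monomial] using monomial_mem_supported (ι := ι) (d1 := d1) (d2 := d2) h 1

theorem d2_mem_supported (h : (0, 1) ∈ s) : d2 ∈ supported ι d1 d2 s := by
  simpa [monomial] using monomial_mem_supported (ι := ι) (d1 := d1) (d2 := d2) h 1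

theorem d1_mul_d2_mem_supported (h : (1, 1) ∈ s) : d1 * d2 ∈ supported ι d1 d2 s := by
  simpa [monomial] using monomial_mem_supported (ι := ι) (d1 := d1) (d2 := d2) h 1

theorem iota_mul_mem_supported (c : V) (hx : x ∈ supported ι d1 d2 s) :
    ι c * x ∈ supported ι d1 d2 s := by
  have key : supported ι d1 d2 s ≤ (supported ι d1 d2 s).comap (AddMonoidHom.mulLeft (ι c)) :=
    supported_le fun p hp c' => by
      simpa [monomial, ← mul_assoc] using
        monomial_mem_supported (d1 := d1) (d2 := d2) hp (c * c')
  exact key hx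

theorem commutator_mem_supported (d : R) (δ : V → V) (hleib : ∀ v, d * ι v = ι v * d + ι (δ v))
    (h1 : Commute d d1) (h2 : Commute d d2) (hx : x ∈ supported ι d1 d2 s) :
    d * x - x * d ∈ supported ι d1 d2 s := by
  have key : supported ι d1 d2 s ≤ (supported ι d1 d2 s).comap
      (AddMonoidHom.mulLeft d - AddMonoidHom.mulRight d) := supported_le fun p hp c => by
    have hD := ((h1.pow_right p.1).mul_right (h2.pow_right p.2)).eq
    have : d * monomial ι d1 d2 c p - monomial ι d1 d2 c p * d = monomial ι d1 d2 (δ c) p := by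
      simp only [monomial, mul_assoc]
      rw [← mul_assoc (d1 ^ p.1), ← hD, ← mul_assoc d, hleib]
      noncomm_ring
    simpa [this] using monomial_mem_supported hp (δ c)
  exact key hx

theorem monomial_mul_pow (hdcomm : Commute d1 d2) (c : V) (p k : ℕ × ℕ) :
    monomial ι d1 d2 c p * (d1 ^ k.1 * d2 ^ k.2) = monomial ι d1 d2 c (p + k) := by
  simp only [monomial, Prod.fst_add, Prod.snd_add, pow_add, mul_assoc]
  rw [← mul_assoc (d2 ^ p.2), ← (hdcomm.pow_pow _ _).eq, mul_assoc]

theorem ofCoeffs_mul_pow (hdcomm : Commute d1 d2) (f : (ℕ × ℕ) →₀ V) (k : ℕ × ℕ) :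
    ofCoeffs ι d1 d2 f * (d1 ^ k.1 * d2 ^ k.2) = ofCoeffs ι d1 d2 (f.mapDomain (· + k)) := by
  rw [ofCoeffs_apply, ofCoeffs_apply, Finsupp.sum_mul,
    Finsupp.sum_mapDomain_index (by simp [monomial]) (by simp [monomial, add_mul])]
  simp only [monomial_mul_pow hdcomm]

theorem mul_pow_mem_supported (hdcomm : Commute d1 d2) (k : ℕ × ℕ)
    (hx : x ∈ supported ι d1 d2 s) :
    x * (d1 ^ k.1 * d2 ^ k.2) ∈ supported ι d1 d2 ((· + k) '' s) := by
  have key : supported ι d1 d2 s ≤ (supported ι d1 d2 ((· + k) '' s)).comap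
      (AddMonoidHom.mulRight (d1 ^ k.1 * d2 ^ k.2)) := supported_le fun p hp c => by
    simpa [monomial_mul_pow hdcomm] using
      monomial_mem_supported (mem_image_of_mem (· + k) hp) c
  exact key hx

theorem pow_mul_mem_supported_Iic (hdcomm : Commute d1 d2) (d : R) (δ : V → V)
    (hleib : ∀ v, d * ι v = ι v * d + ι (δ v)) (h1 : Commute d d1) (h2 : Commute d d2)
    {e : ℕ × ℕ} (hde : d = d1 ^ e.1 * d2 ^ e.2) {q : ℕ × ℕ}
    (hy : y ∈ supported ι d1 d2 (Iic q)) (n : ℕ) :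
    d ^ n * y ∈ supported ι d1 d2 (Iic (q + n • e)) := by
  induction n with
  | zero => simpa using hy
  | succ n ih =>
    have hshift : (· + e) '' Iic (q + n • e) ⊆ Iic (q + (n + 1) • e) := by
      rintro _ ⟨r, hr, rfl⟩
      rw [succ_nsmul, ← add_assoc]
      exact add_le_add_left hr e
    have hle : Iic (q + n • e) ⊆ Iic (q + (n + 1) • e) :=
      Iic_subset_Iic.2 (by rw [succ_nsmul, ← add_assoc]; exact le_self_add)
    have hright := mul_pow_mem_supported hdcomm e ih
    rw [← hde] at hright
    rw [pow_succ', mul_assoc, ← sub_add_cancel (d * _) (_ * d)]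
    exact add_mem (supported_mono hle (commutator_mem_supported d δ hleib h1 h2 ih))
      (supported_mono hshift hright)

theorem monomial_mul_mem_supported_Iic (hdcomm : Commute d1 d2) {δ1 δ2 : V → V}
    (hleib1 : ∀ v, d1 * ι v = ι v * d1 + ι (δ1 v)) (hleib2 : ∀ v, d2 * ι v = ι v * d2 + ι (δ2 v))
    {q : ℕ × ℕ} (hy : y ∈ supported ι d1 d2 (Iic q)) (c : V) (p : ℕ × ℕ) :
    monomial ι d1 d2 c p * y ∈ supported ι d1 d2 (Iic (p + q)) := by
  have h2 := pow_mul_mem_supported_Iic hdcomm d2 δ2 hleib2 hdcomm.symm (.refl d2)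
    (e := (0, 1)) (by simp) hy p.2
  have h12 := pow_mul_mem_supported_Iic hdcomm d1 δ1 hleib1 (.refl d1) hdcomm
    (e := (1, 0)) (by simp) h2 p.1
  have hpq : q + p.2 • ((0, 1) : ℕ × ℕ) + p.1 • (1, 0) = p + q := by
    ext <;> simp [add_comm]
  rw [monomial, mul_assoc, mul_assoc, ← hpq]
  exact iota_mul_mem_supported c h12

theorem mul_mem_supported (hdcomm : Commute d1 d2) {δ1 δ2 : V → V}
    (hleib1 : ∀ v, d1 * ι v = ι v * d1 + ι (δ1 v)) (hleib2 : ∀ v, d2 * ι v = ι v * d2 + ι (δ2 v))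
    (hx : x ∈ supported ι d1 d2 s₁) (hy : y ∈ supported ι d1 d2 s₂)
    (hs : ∀ p ∈ s₁, ∀ q ∈ s₂, Iic (p + q) ⊆ s) : x * y ∈ supported ι d1 d2 s := by
  have key : supported ι d1 d2 s₁ ≤ (supported ι d1 d2 s).comap (AddMonoidHom.mulRight y) :=
    supported_le fun p hp c => by
      have : supported ι d1 d2 s₂ ≤
          (supported ι d1 d2 s).comap (AddMonoidHom.mulLeft (monomial ι d1 d2 c p)) :=
        supported_le fun q hq c' => supported_mono (hs p hp q hq)
          (monomial_mul_mem_supported_Iic hdcomm hleib1 hleib2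
            (monomial_mem_supported self_mem_Iic c') c p)
      exact this hy
  exact key hx

theorem mem_supported_of_mem_closure (hdcomm : Commute d1 d2) {δ1 δ2 : V → V}
    (hleib1 : ∀ v, d1 * ι v = ι v * d1 + ι (δ1 v)) (hleib2 : ∀ v, d2 * ι v = ι v * d2 + ι (δ2 v))
    (h0 : (0, 0) ∈ s) (hs : ∀ p ∈ s, ∀ q ∈ s, Iic (p + q) ⊆ s) {g : Set R}
    (hg : g ⊆ supported ι d1 d2 s) (hx : x ∈ Subring.closure g) :
    x ∈ supported ι d1 d2 s := by
  induction hx using Subring.closure_induction with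
  | mem y hy => exact hg hy
  | zero => exact zero_mem _
  | one => exact one_mem_supported h0
  | add _ _ _ _ ha hb => exact add_mem ha hb
  | neg _ _ ha => exact neg_mem ha
  | mul _ _ _ _ ha hb => exact mul_mem_supported hdcomm hleib1 hleib2 ha hb hs

theorem star_mem_supported [StarRing R] (hdcomm : Commute d1 d2) {δ1 δ2 : V → V}
    (hleib1 : ∀ v, d1 * ι v = ι v * d1 + ι (δ1 v)) (hleib2 : ∀ v, d2 * ι v = ι v * d2 + ι (δ2 v))
    (hstar_ι : ∀ v, star (ι v) = ι v) (hstar_d1 : star d1 = -d1) (hstar_d2 : star d2 = -d2)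
    (hs : IsLowerSet s) (hx : x ∈ supported ι d1 d2 s) : star x ∈ supported ι d1 d2 s := by
  have key : supported ι d1 d2 s ≤ (supported ι d1 d2 s).comap starAddEquiv.toAddMonoidHom :=
    supported_le fun p hp c => by
      have hmem : d2 ^ p.2 * (d1 ^ p.1 * ι c) ∈ supported ι d1 d2 s := by
        have := monomial_mul_mem_supported_Iic hdcomm hleib1 hleib2
          (iota_mem_supported (d1 := d1) (d2 := d2) (self_mem_Iic (a := 0)) c) 1 p
        rw [monomial, map_one, one_mul, mul_assoc, add_zero] at this
        rw [← mul_assoc, ← (hdcomm.pow_pow p.1 p.2).eq, mul_assoc]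
        exact supported_mono (fun r hr => hs hr hp) this
      have hsign (a : R) (n : ℕ) : (-a) ^ n = a ^ n ∨ (-a) ^ n = -a ^ n := by
        rcases neg_one_pow_eq_or R n with h | h <;> simp [neg_pow a n, h]
      rcases hsign d2 p.2 with h | h <;> rcases hsign d1 p.1 with h' | h' <;>
        simpa [monomial, star_mul, star_pow, hstar_ι, hstar_d1, hstar_d2, h, h', mul_assoc]
          using hmem
  exact key hx

theorem Iic_add_subset_setOf_le (w : ℕ × ℕ →+ ℕ) {p q : ℕ × ℕ} {m n k : ℕ} (hp : w p ≤ m)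
    (hq : w q ≤ n) (hk : m + n ≤ k) : Iic (p + q) ⊆ {r | w r ≤ k} := fun r hr => by
  obtain ⟨c, hc⟩ := exists_add_of_le (mem_Iic.1 hr)
  have : w r + w c = w p + w q := by rw [← map_add, ← map_add, hc]
  show w r ≤ k
  omega

theorem isLowerSet_setOf_le (w : ℕ × ℕ →+ ℕ) (n : ℕ) : IsLowerSet {p | w p ≤ n} :=
  fun p q hqp hp => by
    simpa using Iic_add_subset_setOf_le w hp (le_refl (w 0)) le_rfl (by simpa using hqp)

theorem orderLE_mono {w : ℕ × ℕ →+ ℕ} {m n : ℕ} (h : m ≤ n) :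
    orderLE ι d1 d2 w m ≤ orderLE ι d1 d2 w n :=
  supported_mono fun _ hp => le_trans hp h

theorem mul_mem_orderLE (hdcomm : Commute d1 d2) {δ1 δ2 : V → V}
    (hleib1 : ∀ v, d1 * ι v = ι v * d1 + ι (δ1 v)) (hleib2 : ∀ v, d2 * ι v = ι v * d2 + ι (δ2 v))
    {w : ℕ × ℕ →+ ℕ} {m n k : ℕ} (hx : x ∈ orderLE ι d1 d2 w m) (hy : y ∈ orderLE ι d1 d2 w n)
    (hk : m + n ≤ k) : x * y ∈ orderLE ι d1 d2 w k :=
  mul_mem_supported hdcomm hleib1 hleib2 hx hy fun _ hp _ hq => Iic_add_subset_setOf_le w hp hq hk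

theorem mem_orderLE_zero_of_mem_closure (hdcomm : Commute d1 d2) {δ1 δ2 : V → V}
    (hleib1 : ∀ v, d1 * ι v = ι v * d1 + ι (δ1 v)) (hleib2 : ∀ v, d2 * ι v = ι v * d2 + ι (δ2 v))
    {w : ℕ × ℕ →+ ℕ} {d : R} (hd : d ∈ orderLE ι d1 d2 w 0)
    (hx : x ∈ Subring.closure (range ι ∪ {d})) : x ∈ orderLE ι d1 d2 w 0 :=
  mem_supported_of_mem_closure hdcomm hleib1 hleib2 (s := {p | w p ≤ 0}) (map_zero w).le
    (fun _ hp _ hq => Iic_add_subset_setOf_le w hp hq le_rfl)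
    (union_subset (range_subset_iff.2 (iota_mem_supported (map_zero w).le))
      (singleton_subset_iff.2 hd)) hx

def totalDegree : ℕ × ℕ →+ ℕ := AddMonoidHom.fst ℕ ℕ + AddMonoidHom.snd ℕ ℕ

@[simp]
theorem totalDegree_apply (p : ℕ × ℕ) : totalDegree p = p.1 + p.2 := rfl

theorem sandwich_sub_mem_orderLE (hdcomm : Commute d1 d2) {δ1 δ2 : V → V}
    (hleib1 : ∀ v, d1 * ι v = ι v * d1 + ι (δ1 v)) (hleib2 : ∀ v, d2 * ι v = ι v * d2 + ι (δ2 v))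
    {n : ℕ} (hx : x ∈ orderLE ι d1 d2 totalDegree n) (u : V) :
    (d1 * d2 + ι u) * x * (d1 * d2 + ι u) - x * (d1 ^ 2 * d2 ^ 2) ∈
      orderLE ι d1 d2 totalDegree (n + 3) := by
  have hmul {m n k : ℕ} {x y : R} (hx : x ∈ orderLE ι d1 d2 totalDegree m)
      (hy : y ∈ orderLE ι d1 d2 totalDegree n) (hk : m + n ≤ k) :
      x * y ∈ orderLE ι d1 d2 totalDegree k :=
    mul_mem_orderLE hdcomm hleib1 hleib2 hx hy hk
  have hd1 : d1 ∈ orderLE ι d1 d2 totalDegree 1 := d1_mem_supported (by simp)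
  have hd2 : d2 ∈ orderLE ι d1 d2 totalDegree 1 := d2_mem_supported (by simp)
  have hd12 : d1 * d2 ∈ orderLE ι d1 d2 totalDegree 2 := d1_mul_d2_mem_supported (by simp)
  have hu : ι u ∈ orderLE ι d1 d2 totalDegree 0 := iota_mem_supported (by simp) u
  have hH : d1 * d2 + ι u ∈ orderLE ι d1 d2 totalDegree 2 :=
    add_mem hd12 (orderLE_mono (by omega) hu)
  have hc1 := commutator_mem_supported d1 δ1 hleib1 (.refl d1) hdcomm hx
  have hc2 := commutator_mem_supported d2 δ2 hleib2 hdcomm.symm (.refl d2) hx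
  have t1 : d1 * (d2 * x - x * d2) + (d1 * x - x * d1) * d2 ∈
      orderLE ι d1 d2 totalDegree (n + 1) :=
    add_mem (hmul hd1 hc2 (by omega)) (hmul hc1 hd2 le_rfl)
  have t2 : d1 * d2 * x * ι u ∈ orderLE ι d1 d2 totalDegree (n + 3) :=
    hmul (hmul hd12 hx le_rfl) hu (by omega)
  have t3 : ι u * x * (d1 * d2 + ι u) ∈ orderLE ι d1 d2 totalDegree (n + 3) :=
    hmul (hmul hu hx le_rfl) hH (by omega)
  have hid : (d1 * d2 + ι u) * x * (d1 * d2 + ι u) - x * (d1 ^ 2 * d2 ^ 2) =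
      (d1 * (d2 * x - x * d2) + (d1 * x - x * d1) * d2) * (d1 * d2) +
        (d1 * d2 * x * ι u + ι u * x * (d1 * d2 + ι u)) := by
    linear_combination (norm := noncomm_ring) -x * d1 * hdcomm.eq * d2
  rw [hid]
  exact add_mem (hmul t1 hd12 le_rfl) (add_mem t2 t3)

theorem eq_zero_of_sandwich_mem (hdcomm : Commute d1 d2) {δ1 δ2 : V → V}
    (hleib1 : ∀ v, d1 * ι v = ι v * d1 + ι (δ1 v)) (hleib2 : ∀ v, d2 * ι v = ι v * d2 + ι (δ2 v))
    (hinj : Function.Injective (ofCoeffs ι d1 d2)) (u : V) (hx : x ∈ supported ι d1 d2 univ)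
    (h : (d1 * d2 + ι u) * x * (d1 * d2 + ι u) ∈ supported ι d1 d2 {p | p.1 ≤ 1 ∨ p.2 ≤ 1}) :
    x = 0 := by
  obtain ⟨f, -, rfl⟩ := mem_supported.1 hx
  by_contra hne
  have hf : f.support.Nonempty := Finsupp.support_nonempty_iff.2 (by rintro rfl; simp at hne)
  obtain ⟨p₀, hp₀, hmax⟩ := f.support.exists_max_image totalDegree hf
  have hord : ofCoeffs ι d1 d2 f ∈ orderLE ι d1 d2 totalDegree (totalDegree p₀) :=
    mem_supported.2 ⟨f, hmax, rfl⟩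
  have hshift : ofCoeffs ι d1 d2 f * (d1 ^ 2 * d2 ^ 2) ∈ supported ι d1 d2
      ({p | p.1 ≤ 1 ∨ p.2 ≤ 1} ∪ {p | totalDegree p ≤ totalDegree p₀ + 3}) := by
    rw [← sub_sub_cancel ((d1 * d2 + ι u) * _ * (d1 * d2 + ι u)) (ofCoeffs ι d1 d2 f * _)]
    exact sub_mem (supported_mono subset_union_left h)
      (supported_mono subset_union_right (sandwich_sub_mem_orderLE hdcomm hleib1 hleib2 hord u))
  rw [show d1 ^ 2 * d2 ^ 2 = d1 ^ (2, 2).1 * d2 ^ (2, 2).2 from rfl,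
    ofCoeffs_mul_pow hdcomm] at hshift
  have hmem : p₀ + (2, 2) ∈ (f.mapDomain (· + (2, 2))).support := by
    rw [Finsupp.mem_support_iff, Finsupp.mapDomain_apply (add_left_injective _)]
    exact Finsupp.mem_support_iff.1 hp₀
  have := support_subset_of_ofCoeffs_mem hinj hshift hmem
  simp only [mem_union, mem_ofPred_eq, Prod.fst_add, Prod.snd_add, totalDegree_apply] at this
  omega

theorem sandwich_eq_of_commutator_eq [StarRing R] (hdcomm : Commute d1 d2)
    (hstar_ι : ∀ v, star (ι v) = ι v) (hstar_d1 : star d1 = -d1) (hstar_d2 : star d2 = -d2)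
    {u w1 w2 : V} {A1 A2 P Q Rr : R}
    (hHA1 : (d1 * d2 + ι u) * A1 + star A1 * (d1 * d2 + ι u) = ι w1)
    (hHA2 : (d1 * d2 + ι u) * A2 + star A2 * (d1 * d2 + ι u) = ι w2)
    (hdec : A1 * A2 - A2 * A1 = P * d1 + Q * d2 + Rr * (d1 * d2 + ι u)) :
    (d1 * d2 + ι u) * (Rr + star Rr) * (d1 * d2 + ι u) =
      (ι w1 * A2 + star A2 * ι w1 - (d1 * d2 + ι u) * (Q * d2) + d2 * star Q * (d1 * d2 + ι u)) -
        (ι w2 * A1 + star A1 * ι w2 + (d1 * d2 + ι u) * (P * d1) -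
          d1 * star P * (d1 * d2 + ι u)) := by
  set H := d1 * d2 + ι u
  have hstarH : star H = H := by
    rw [star_add, star_mul, hstar_d1, hstar_d2, hstar_ι, neg_mul_neg, ← hdcomm.eq]
  have hdec' := congrArg star hdec
  simp only [star_sub, star_add, star_mul, hstar_d1, hstar_d2, hstarH] at hdec'
  linear_combination (norm := noncomm_ring) hHA1 * A2 - hHA2 * A1 - star A1 * hHA2 +
    star A2 * hHA1 - H * hdec - hdec' * H

theorem sandwich_mem_of_commutator_eq [StarRing R] (hdcomm : Commute d1 d2) {δ1 δ2 : V → V}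
    (hleib1 : ∀ v, d1 * ι v = ι v * d1 + ι (δ1 v)) (hleib2 : ∀ v, d2 * ι v = ι v * d2 + ι (δ2 v))
    (hstar_ι : ∀ v, star (ι v) = ι v) (hstar_d1 : star d1 = -d1) (hstar_d2 : star d2 = -d2)
    {u w1 w2 : V} {A1 A2 P Q Rr : R}
    (hA1 : A1 ∈ orderLE ι d1 d2 (.snd ℕ ℕ) 0) (hP : P ∈ orderLE ι d1 d2 (.snd ℕ ℕ) 0)
    (hA2 : A2 ∈ orderLE ι d1 d2 (.fst ℕ ℕ) 0) (hQ : Q ∈ orderLE ι d1 d2 (.fst ℕ ℕ) 0)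
    (hHA1 : (d1 * d2 + ι u) * A1 + star A1 * (d1 * d2 + ι u) = ι w1)
    (hHA2 : (d1 * d2 + ι u) * A2 + star A2 * (d1 * d2 + ι u) = ι w2)
    (hdec : A1 * A2 - A2 * A1 = P * d1 + Q * d2 + Rr * (d1 * d2 + ι u)) :
    (d1 * d2 + ι u) * (Rr + star Rr) * (d1 * d2 + ι u) ∈
      supported ι d1 d2 {p | p.1 ≤ 1 ∨ p.2 ≤ 1} := by
  rw [sandwich_eq_of_commutator_eq hdcomm hstar_ι hstar_d1 hstar_d2 hHA1 hHA2 hdec]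
  set H := d1 * d2 + ι u
  have hmul {w : ℕ × ℕ →+ ℕ} {m n k : ℕ} {x y : R} (hx : x ∈ orderLE ι d1 d2 w m)
      (hy : y ∈ orderLE ι d1 d2 w n) (hk : m + n ≤ k) : x * y ∈ orderLE ι d1 d2 w k :=
    mul_mem_orderLE hdcomm hleib1 hleib2 hx hy hk
  have hstar {w : ℕ × ℕ →+ ℕ} {a : R} (ha : a ∈ orderLE ι d1 d2 w 0) :
      star a ∈ orderLE ι d1 d2 w 0 :=
    star_mem_supported hdcomm hleib1 hleib2 hstar_ι hstar_d1 hstar_d2 (isLowerSet_setOf_le w 0) ha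
  have hι0 (w : ℕ × ℕ →+ ℕ) (c : V) : ι c ∈ orderLE ι d1 d2 w 0 :=
    iota_mem_supported (map_zero w).le c
  have hH (w : ℕ × ℕ →+ ℕ) (hw : w (1, 1) ≤ 1) : H ∈ orderLE ι d1 d2 w 1 :=
    add_mem (d1_mul_d2_mem_supported hw) (orderLE_mono zero_le_one (hι0 w u))
  refine sub_mem (supported_mono (fun p hp => Or.inl hp) ?_)
    (supported_mono (fun p hp => Or.inr hp) ?_)
  · have hd2 : d2 ∈ orderLE ι d1 d2 (.fst ℕ ℕ) 0 := d2_mem_supported (by simp)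
    have t1 : ι w1 * A2 + star A2 * ι w1 ∈ orderLE ι d1 d2 (.fst ℕ ℕ) 0 :=
      add_mem (hmul (hι0 _ w1) hA2 le_rfl) (hmul (hstar hA2) (hι0 _ w1) le_rfl)
    have t2 : H * (Q * d2) ∈ orderLE ι d1 d2 (.fst ℕ ℕ) 1 :=
      hmul (hH _ (by simp)) (hmul hQ hd2 le_rfl) le_rfl
    have t3 : d2 * star Q * H ∈ orderLE ι d1 d2 (.fst ℕ ℕ) 1 :=
      hmul (hmul hd2 (hstar hQ) le_rfl) (hH _ (by simp)) le_rfl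
    exact add_mem (sub_mem (orderLE_mono zero_le_one t1) t2) t3
  · have hd1 : d1 ∈ orderLE ι d1 d2 (.snd ℕ ℕ) 0 := d1_mem_supported (by simp)
    have t1 : ι w2 * A1 + star A1 * ι w2 ∈ orderLE ι d1 d2 (.snd ℕ ℕ) 0 :=
      add_mem (hmul (hι0 _ w2) hA1 le_rfl) (hmul (hstar hA1) (hι0 _ w2) le_rfl)
    have t2 : H * (P * d1) ∈ orderLE ι d1 d2 (.snd ℕ ℕ) 1 :=
      hmul (hH _ (by simp)) (hmul hP hd1 le_rfl) le_rfl
    have t3 : d1 * star P * H ∈ orderLE ι d1 d2 (.snd ℕ ℕ) 1 :=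
      hmul (hmul hd1 (hstar hP) le_rfl) (hH _ (by simp)) le_rfl
    exact sub_mem (add_mem (orderLE_mono zero_le_one t1) t2) t3

end DiffOperator

open DiffOperator in
theorem skew_adjointness_of_R_general
    {V R : Type*} [CommRing V] [Algebra ℂ V]
    [Ring R] [StarRing R]
    (ι : V →+* R)
    (d1 d2 : R)
    (δ1 δ2 : Derivation ℂ V V)
    (hleib1 : ∀ v : V, d1 * ι v = ι v * d1 + ι (δ1 v))
    (hleib2 : ∀ v : V, d2 * ι v = ι v * d2 + ι (δ2 v))
    (hdcomm : d1 * d2 = d2 * d1)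
    (hstar_d1 : star d1 = -d1)
    (hstar_d2 : star d2 = -d2)
    (hstar_ι : ∀ v : V, star (ι v) = ι v)
    (hindep : ∀ f : (ℕ × ℕ) →₀ V,
      (f.sum fun p c => ι c * d1 ^ p.1 * d2 ^ p.2) = 0 → f = 0)
    (u : V) (A1 A2 : R)
    (hA1 : A1 ∈ Subring.closure (Set.range ⇑ι ∪ {d1}))
    (hA2 : A2 ∈ Subring.closure (Set.range ⇑ι ∪ {d2}))
    (w1 w2 : V)
    (hHA1 : (d1 * d2 + ι u) * A1 + star A1 * (d1 * d2 + ι u) = ι w1)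
    (hHA2 : (d1 * d2 + ι u) * A2 + star A2 * (d1 * d2 + ι u) = ι w2)
    (P Q Rr : R)
    (hP : P ∈ Subring.closure (Set.range ⇑ι ∪ {d1}))
    (hQ : Q ∈ Subring.closure (Set.range ⇑ι ∪ {d2}))
    (hRr : Rr ∈ Subring.closure (Set.range ⇑ι ∪ {d1, d2}))
    (hdec : A1 * A2 - A2 * A1 = P * d1 + Q * d2 + Rr * (d1 * d2 + ι u)) :
    Rr + star Rr = 0 := by
  have hinj : Function.Injective (ofCoeffs ι d1 d2) := (injective_iff_map_eq_zero _).2 hindep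
  have hRr' : Rr ∈ supported ι d1 d2 Set.univ :=
    mem_supported_of_mem_closure hdcomm hleib1 hleib2 (Set.mem_univ _)
      (fun _ _ _ _ => Set.subset_univ _)
      (Set.union_subset (Set.range_subset_iff.2 (iota_mem_supported trivial))
        (Set.insert_subset_iff.2 ⟨d1_mem_supported trivial,
          Set.singleton_subset_iff.2 (d2_mem_supported trivial)⟩)) hRr
  have hd1 : d1 ∈ orderLE ι d1 d2 (.snd ℕ ℕ) 0 := d1_mem_supported (by simp)
  have hd2 : d2 ∈ orderLE ι d1 d2 (.fst ℕ ℕ) 0 := d2_mem_supported (by simp)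
  have hA1' := mem_orderLE_zero_of_mem_closure hdcomm hleib1 hleib2 hd1 hA1
  have hP' := mem_orderLE_zero_of_mem_closure hdcomm hleib1 hleib2 hd1 hP
  have hA2' := mem_orderLE_zero_of_mem_closure hdcomm hleib1 hleib2 hd2 hA2
  have hQ' := mem_orderLE_zero_of_mem_closure hdcomm hleib1 hleib2 hd2 hQ
  exact eq_zero_of_sandwich_mem hdcomm hleib1 hleib2 hinj u
    (add_mem hRr' (star_mem_supported hdcomm hleib1 hleib2 hstar_ι hstar_d1 hstar_d2
      isLowerSet_univ hRr'))
    (sandwich_mem_of_commutator_eq hdcomm hleib1 hleib2 hstar_ι hstar_d1 hstar_d2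
      hA1' hP' hA2' hQ' hHA1 hHA2 hdec)

/-- **Skew-adjointness of `R` in the decomposition of `[A₁, A₂]`** (end of the proof of
Lemma 5 of the paper).

`R'` models the ring `A[∂₁, ∂₂]` of differential operators over a commutative domain
`A` (embedded by `ι`), with adjoint given by the star operation (`∂ᵢ* = -∂ᵢ`, `v* = v`,
`(PQ)* = Q*P*`); the monomials `ι(c)·∂₁ⁱ∂₂ʲ` are linearly independent.  Suppose
`A₁ ∈ A[∂₁]`, `A₂ ∈ A[∂₂]` satisfy `H·Aᵢ + Aᵢ*·H = Aᵢ*(u)` for `i = 1, 2`, where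
`H = ∂₁∂₂ + u` and `wᵢ = Aᵢ*(u) ∈ A` is characterized by `Aᵢ*·u ≡ wᵢ` modulo the right
ideal generated by `∂₁, ∂₂`.  If `[A₁, A₂] = P∂₁ + Q∂₂ + Rr·H` with `P ∈ A[∂₁]`,
`Q ∈ A[∂₂]`, `Rr ∈ A[∂₁, ∂₂]`, then `Rr` is skew-adjoint: `Rr + Rr* = 0`. -/
theorem skew_adjointness_of_R
    {V R : Type*} [CommRing V] [IsDomain V] [Algebra ℂ V]
    [Ring R] [StarRing R]
    (ι : V →+* R) (hι : Function.Injective ι)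
    (d1 d2 : R)
    (δ1 δ2 : Derivation ℂ V V)
    (hleib1 : ∀ v : V, d1 * ι v = ι v * d1 + ι (δ1 v))
    (hleib2 : ∀ v : V, d2 * ι v = ι v * d2 + ι (δ2 v))
    (hdcomm : d1 * d2 = d2 * d1)
    (hstar_d1 : star d1 = -d1)
    (hstar_d2 : star d2 = -d2)
    (hstar_ι : ∀ v : V, star (ι v) = ι v)
    (hindep : ∀ f : (ℕ × ℕ) →₀ V,
      (f.sum fun p c => ι c * d1 ^ p.1 * d2 ^ p.2) = 0 → f = 0)
    (u : V) (A1 A2 : R)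
    (hA1 : A1 ∈ Subring.closure (Set.range ⇑ι ∪ {d1}))
    (hA2 : A2 ∈ Subring.closure (Set.range ⇑ι ∪ {d2}))
    (w1 w2 : V)
    (hw1 : ∃ X Y : R, star A1 * ι u = ι w1 + X * d1 + Y * d2)
    (hw2 : ∃ X Y : R, star A2 * ι u = ι w2 + X * d1 + Y * d2)
    (hHA1 : (d1 * d2 + ι u) * A1 + star A1 * (d1 * d2 + ι u) = ι w1)
    (hHA2 : (d1 * d2 + ι u) * A2 + star A2 * (d1 * d2 + ι u) = ι w2)
    (P Q Rr : R)
    (hP : P ∈ Subring.closure (Set.range ⇑ι ∪ {d1}))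
    (hQ : Q ∈ Subring.closure (Set.range ⇑ι ∪ {d2}))
    (hRr : Rr ∈ Subring.closure (Set.range ⇑ι ∪ {d1, d2}))
    (hdec : A1 * A2 - A2 * A1 = P * d1 + Q * d2 + Rr * (d1 * d2 + ι u)) :
    Rr + star Rr = 0 :=
  skew_adjointness_of_R_general ι d1 d2 δ1 δ2 hleib1 hleib2 hdcomm hstar_d1 hstar_d2 hstar_ι hindep
    u A1 A2 hA1 hA2 w1 w2 hHA1 hHA2 P Q Rr hP hQ hRr hdec
end

section
/- Let H = ∂₁∂₂ + u and suppose operators A, A' satisfy H·A + A*·H = A*(u) and H·A' + (A')*·H = (A')*(u). Define derivations whose action on H is dH/dt = [A, H] − (A + A*)H = −A*(u) and dH/ds = [A', H] − (A' + (A')*)H = −(A')*(u). Then the commutator of the two flows applied to H equals [X, H] − (X + X*)H where X = dA/ds − dA'/dt + [A, A']; in particular, if X = R·H with R skew-adjoint, then the two flows commute on H: d²H/(ds dt) = d²H/(dt ds). -/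
/-!
Both flows have the form `Ḣ = [A, H] - (A + A*)H = -(H A + A* H)`. Differentiating one
such velocity along the other flow and antisymmetrising, all terms in which `H` stands
between two of `A, A*, A', A'*` cancel, and what is left is again a velocity of the same
form, generated by `X = A_s - A'_t + [A, A']`. When `X = R H` with `R* = -R` and `H* = H`,
this velocity is `-(H R H + H R* H) = 0`.
-/

section Flows

variable {R : Type*} [Ring R] [StarRing R]

def flowVelocity (A H : R) : R := (A * H - H * A) - (A + star A) * H

theorem flowVelocity_eq_neg (A H : R) : flowVelocity A H = -(H * A + star A * H) := by
  unfold flowVelocity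
  noncomm_ring

theorem flowVelocity_mul_right_eq_zero {H R₀ : R} (hH : IsSelfAdjoint H)
    (hR₀ : star R₀ = -R₀) : flowVelocity (R₀ * H) H = 0 := by
  rw [flowVelocity_eq_neg, star_mul, hH.star_eq, hR₀]
  noncomm_ring

theorem flowVelocity_commutator {D D' : R →+ R}
    (hD_mul : ∀ x y : R, D (x * y) = D x * y + x * D y)
    (hD'_mul : ∀ x y : R, D' (x * y) = D' x * y + x * D' y)
    (hD_star : ∀ x : R, D (star x) = star (D x))
    (hD'_star : ∀ x : R, D' (star x) = star (D' x))
    {A A' H : R} (hDH : D H = flowVelocity A H) (hD'H : D' H = flowVelocity A' H) :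
    D' (D H) - D (D' H) = flowVelocity (D' A - D A' + (A * A' - A' * A)) H := by
  rw [flowVelocity_eq_neg] at hDH hD'H ⊢
  rw [hDH, hD'H]
  simp only [map_neg, map_add, hD_mul, hD'_mul, hD_star, hD'_star, hDH, hD'H,
    star_add, star_sub, star_mul]
  noncomm_ring

theorem isSelfAdjoint_mul_add_of_star_eq_neg {d1 d2 c : R} (hdcomm : d1 * d2 = d2 * d1)
    (hstar_d1 : star d1 = -d1) (hstar_d2 : star d2 = -d2) (hc : IsSelfAdjoint c) :
    IsSelfAdjoint (d1 * d2 + c) := by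
  rw [IsSelfAdjoint, star_add, star_mul, hstar_d1, hstar_d2, hc.star_eq, neg_mul_neg, hdcomm]

end Flows

theorem flows_commute_on_H_general
    {V R : Type*} [CommRing V]
    [Ring R] [StarRing R]
    (ι : V →+* R)
    (d1 d2 : R)
    (hdcomm : d1 * d2 = d2 * d1)
    (hstar_d1 : star d1 = -d1)
    (hstar_d2 : star d2 = -d2)
    (hstar_ι : ∀ v : V, star (ι v) = ι v)
    -- the two evolutionary derivations `d/dt` and `d/ds`
    (Dt Ds : R → R)
    (hDt_add : ∀ x y : R, Dt (x + y) = Dt x + Dt y)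
    (hDs_add : ∀ x y : R, Ds (x + y) = Ds x + Ds y)
    (hDt_mul : ∀ x y : R, Dt (x * y) = Dt x * y + x * Dt y)
    (hDs_mul : ∀ x y : R, Ds (x * y) = Ds x * y + x * Ds y)
    (hDt_star : ∀ x : R, Dt (star x) = star (Dt x))
    (hDs_star : ∀ x : R, Ds (star x) = star (Ds x))
    (u : V) (A₀ A₀' : R)
    (hDtH : Dt (d1 * d2 + ι u)
      = (A₀ * (d1 * d2 + ι u) - (d1 * d2 + ι u) * A₀)
        - (A₀ + star A₀) * (d1 * d2 + ι u))
    (hDsH : Ds (d1 * d2 + ι u)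
      = (A₀' * (d1 * d2 + ι u) - (d1 * d2 + ι u) * A₀')
        - (A₀' + star A₀') * (d1 * d2 + ι u)) :
    (Ds (Dt (d1 * d2 + ι u)) - Dt (Ds (d1 * d2 + ι u))
      = ((Ds A₀ - Dt A₀' + (A₀ * A₀' - A₀' * A₀)) * (d1 * d2 + ι u)
          - (d1 * d2 + ι u) * (Ds A₀ - Dt A₀' + (A₀ * A₀' - A₀' * A₀)))
        - ((Ds A₀ - Dt A₀' + (A₀ * A₀' - A₀' * A₀))
            + star (Ds A₀ - Dt A₀' + (A₀ * A₀' - A₀' * A₀)))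
          * (d1 * d2 + ι u)) ∧
    (∀ R₀ : R, Ds A₀ - Dt A₀' + (A₀ * A₀' - A₀' * A₀) = R₀ * (d1 * d2 + ι u) →
      star R₀ = -R₀ →
      Ds (Dt (d1 * d2 + ι u)) = Dt (Ds (d1 * d2 + ι u))) := by
  have commutator : Ds (Dt (d1 * d2 + ι u)) - Dt (Ds (d1 * d2 + ι u))
      = flowVelocity (Ds A₀ - Dt A₀' + (A₀ * A₀' - A₀' * A₀)) (d1 * d2 + ι u) :=
    flowVelocity_commutator (D := AddMonoidHom.mk' Dt hDt_add)
      (D' := AddMonoidHom.mk' Ds hDs_add) hDt_mul hDs_mul hDt_star hDs_star hDtH hDsH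
  refine ⟨commutator, fun R₀ hX hR₀ => sub_eq_zero.mp ?_⟩
  rw [commutator, hX]
  exact flowVelocity_mul_right_eq_zero
    (isSelfAdjoint_mul_add_of_star_eq_neg hdcomm hstar_d1 hstar_d2 (hstar_ι u)) hR₀

/-- **Commutativity of the flows on `H`** (proof of the Theorem of the paper).

`R` models the ring `A[∂₁, ∂₂]` of differential operators over a commutative
differential algebra `A` with adjoint given by the star operation; `Dt, Ds` are
evolutionary derivations of `R` (additive, Leibniz, commuting with `star` and killing
the symbols `∂₁, ∂₂`).  Let `H = ∂₁∂₂ + u` and suppose `A₀, A₀'` satisfy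
`H·A₀ + A₀*·H = A₀*(u)` and `H·A₀' + A₀'*·H = A₀'*(u)` (the right-hand sides being
elements `w, w'` of `A` characterized modulo the right ideal generated by `∂₁, ∂₂`),
and that the flows act on `H` by `Dt H = [A₀, H] - (A₀ + A₀*)·H` and
`Ds H = [A₀', H] - (A₀' + A₀'*)·H`.  Then
`Ds (Dt H) - Dt (Ds H) = [X, H] - (X + X*)·H` where
`X = Ds A₀ - Dt A₀' + [A₀, A₀']`; in particular, if `X = R₀·H` with `R₀` skew-adjoint,
the two flows commute on `H`. -/
theorem flows_commute_on_H
    {V R : Type*} [CommRing V] [Algebra ℂ V]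
    [Ring R] [StarRing R]
    (ι : V →+* R) (hι : Function.Injective ι)
    (d1 d2 : R)
    (δ1 δ2 : Derivation ℂ V V)
    (hleib1 : ∀ v : V, d1 * ι v = ι v * d1 + ι (δ1 v))
    (hleib2 : ∀ v : V, d2 * ι v = ι v * d2 + ι (δ2 v))
    (hdcomm : d1 * d2 = d2 * d1)
    (hstar_d1 : star d1 = -d1)
    (hstar_d2 : star d2 = -d2)
    (hstar_ι : ∀ v : V, star (ι v) = ι v)
    -- the two evolutionary derivations `d/dt` and `d/ds`
    (Dt Ds : R → R)
    (hDt_add : ∀ x y : R, Dt (x + y) = Dt x + Dt y)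
    (hDs_add : ∀ x y : R, Ds (x + y) = Ds x + Ds y)
    (hDt_mul : ∀ x y : R, Dt (x * y) = Dt x * y + x * Dt y)
    (hDs_mul : ∀ x y : R, Ds (x * y) = Ds x * y + x * Ds y)
    (hDt_star : ∀ x : R, Dt (star x) = star (Dt x))
    (hDs_star : ∀ x : R, Ds (star x) = star (Ds x))
    (hDt_d1 : Dt d1 = 0) (hDt_d2 : Dt d2 = 0)
    (hDs_d1 : Ds d1 = 0) (hDs_d2 : Ds d2 = 0)
    (u : V) (A₀ A₀' : R) (w w' : V)
    -- `w = A₀*(u)` and `w' = A₀'*(u)`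
    (hw : ∃ X Y : R, star A₀ * ι u = ι w + X * d1 + Y * d2)
    (hw' : ∃ X Y : R, star A₀' * ι u = ι w' + X * d1 + Y * d2)
    (hA : (d1 * d2 + ι u) * A₀ + star A₀ * (d1 * d2 + ι u) = ι w)
    (hA' : (d1 * d2 + ι u) * A₀' + star A₀' * (d1 * d2 + ι u) = ι w')
    (hDtH : Dt (d1 * d2 + ι u)
      = (A₀ * (d1 * d2 + ι u) - (d1 * d2 + ι u) * A₀)
        - (A₀ + star A₀) * (d1 * d2 + ι u))
    (hDsH : Ds (d1 * d2 + ι u)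
      = (A₀' * (d1 * d2 + ι u) - (d1 * d2 + ι u) * A₀')
        - (A₀' + star A₀') * (d1 * d2 + ι u)) :
    (Ds (Dt (d1 * d2 + ι u)) - Dt (Ds (d1 * d2 + ι u))
      = ((Ds A₀ - Dt A₀' + (A₀ * A₀' - A₀' * A₀)) * (d1 * d2 + ι u)
          - (d1 * d2 + ι u) * (Ds A₀ - Dt A₀' + (A₀ * A₀' - A₀' * A₀)))
        - ((Ds A₀ - Dt A₀' + (A₀ * A₀' - A₀' * A₀))
            + star (Ds A₀ - Dt A₀' + (A₀ * A₀' - A₀' * A₀)))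
          * (d1 * d2 + ι u)) ∧
    (∀ R₀ : R, Ds A₀ - Dt A₀' + (A₀ * A₀' - A₀' * A₀) = R₀ * (d1 * d2 + ι u) →
      star R₀ = -R₀ →
      Ds (Dt (d1 * d2 + ι u)) = Dt (Ds (d1 * d2 + ι u))) :=
  flows_commute_on_H_general ι d1 d2 hdcomm hstar_d1 hstar_d2 hstar_ι Dt Ds hDt_add hDs_add hDt_mul
    hDs_mul hDt_star hDs_star u A₀ A₀' hDtH hDsH
end
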